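/- arXiv:2106.12781 — 7 statements merged into one kernel-verified Lean document; each statement's English description precedes it below -/
import Mathlib

section
/- For n ≥ 3, the holomorph Hol(C_{2^n}) is metabelian (its commutator subgroup is abelian) but not metacyclic (it has no cyclic normal subgroup with cyclic quotient). -/
/-- The cyclic group of order `m`, written multiplicatively. -/
abbrev Cyc (m : ℕ) := Multiplicative (ZMod m)

/-- The holomorph `Hol(C_m) = C_m ⋊ Aut(C_m)`. -/
abbrev Hol (m : ℕ) := Cyc m ⋊[MonoidHom.id (MulAut (Cyc m))] MulAut (Cyc m)

namespace HolAux

lemma addAut_one_mul {m : ℕ} (f : AddAut (ZMod m)) (x : ZMod m) : f 1 * x = f x := by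
  rw [mul_comm, ← x.intCast_zmod_cast, ← zsmul_eq_mul, ← map_zsmul, zsmul_one]

def autMulEquiv (m : ℕ) : MulAut (Cyc m) ≃* Multiplicative (AddAut (ZMod m)) where
  toFun α := Multiplicative.ofAdd
    { toFun := fun x => Multiplicative.toAdd (α (Multiplicative.ofAdd x))
      invFun := fun x => Multiplicative.toAdd (α.symm (Multiplicative.ofAdd x))
      left_inv := fun x => by simp
      right_inv := fun x => by simp
      map_add' := fun x y => by simp [ofAdd_add] }
  invFun g :=
    { toFun := fun a => Multiplicative.ofAdd (Multiplicative.toAdd g (Multiplicative.toAdd a))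
      invFun := fun a => Multiplicative.ofAdd ((Multiplicative.toAdd g).symm (Multiplicative.toAdd a))
      left_inv := fun x => by simp
      right_inv := fun x => by simp
      map_mul' := fun x y => by simp [toAdd_mul, ofAdd_add] }
  left_inv α := by ext a; rfl
  right_inv g := rfl
  map_mul' α β := rfl

def autHom (m : ℕ) : MulAut (Cyc m) →* (ZMod m)ˣ :=
  (ZMod.AddAutEquivUnits m).toMultiplicative.toMonoidHom.comp (autMulEquiv m).toMonoidHom

lemma autHom_bijective (m : ℕ) : Function.Bijective (autHom m) :=
  (ZMod.AddAutEquivUnits m).bijective.comp (autMulEquiv m).bijective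

lemma toAdd_aut_apply {m : ℕ} (α : MulAut (Cyc m)) (a : Cyc m) :
    Multiplicative.toAdd (α a) = (autHom m α : ZMod m) * Multiplicative.toAdd a := by
  have h := addAut_one_mul (Multiplicative.toAdd (autMulEquiv m α)) (Multiplicative.toAdd a)
  have h2 : ((autHom m α : (ZMod m)ˣ) : ZMod m) = (Multiplicative.toAdd (autMulEquiv m α)) 1 := by
    rfl
  rw [h2, h]; rfl

abbrev V := Multiplicative (ZMod 2) × (ZMod 8)ˣ

lemma units_zmod_two_eq_one (u : (ZMod 2)ˣ) : u = 1 := by revert u; decide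

/-- The key homomorphism `Hol m →* V`. -/
def holHom (m : ℕ) (h2 : 2 ∣ m) (h8 : 8 ∣ m) : Hol m →* V where
  toFun x := (Multiplicative.ofAdd (ZMod.castHom h2 (ZMod 2) (Multiplicative.toAdd x.left)),
      ZMod.unitsMap h8 (autHom m x.right))
  map_one' := by simp
  map_mul' x y := by
    have hl : (x * y).left = x.left * x.right y.left := rfl
    have hr : (x * y).right = x.right * y.right := rfl
    refine Prod.ext ?_ ?_
    · show Multiplicative.ofAdd (ZMod.castHom h2 (ZMod 2) (Multiplicative.toAdd (x * y).left)) = _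
      rw [hl]
      have : Multiplicative.toAdd (x.left * x.right y.left)
          = Multiplicative.toAdd x.left + (autHom m x.right : ZMod m) * Multiplicative.toAdd y.left := by
        rw [toAdd_mul, toAdd_aut_apply]
      rw [this, map_add, map_mul]
      have hu : ZMod.castHom h2 (ZMod 2) ((autHom m x.right : ZMod m)) = 1 := by
        have : ZMod.castHom h2 (ZMod 2) ((autHom m x.right : ZMod m))
            = ((ZMod.unitsMap h2 (autHom m x.right) : (ZMod 2)ˣ) : ZMod 2) := rfl
        rw [this, units_zmod_two_eq_one (ZMod.unitsMap h2 (autHom m x.right))]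
        rfl
      rw [hu, one_mul, ofAdd_add]
      rfl
    · show ZMod.unitsMap h8 (autHom m (x * y).right) = _
      rw [hr, map_mul, map_mul]
      rfl

lemma holHom_surjective (m : ℕ) [NeZero m] (h2 : 2 ∣ m) (h8 : 8 ∣ m) :
    Function.Surjective (holHom m h2 h8) := by
  rintro ⟨x, u⟩
  obtain ⟨α, hα⟩ := (autHom_bijective m).2 ((ZMod.unitsMap_surjective h8 u).choose)
  have hα' : ZMod.unitsMap h8 (autHom m α) = u := by
    rw [hα]; exact (ZMod.unitsMap_surjective h8 u).choose_spec
  obtain ⟨k, hk⟩ := ZMod.intCast_surjective (Multiplicative.toAdd x)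
  refine ⟨⟨Multiplicative.ofAdd ((k : ZMod m)), α⟩, ?_⟩
  refine Prod.ext ?_ hα'
  show Multiplicative.ofAdd (ZMod.castHom h2 (ZMod 2) ((k : ZMod m))) = x
  rw [map_intCast, hk]
  rfl

end HolAux

namespace HolAux

lemma V_sq (v : V) : v ^ 2 = 1 := by revert v; decide

lemma V_card : Nat.card V = 8 := by
  rw [Nat.card_eq_fintype_card]; decide

lemma cyclic_sq_card_le {C : Type*} [Group C] [Finite C] (hc : IsCyclic C)
    (h2 : ∀ x : C, x ^ 2 = 1) : Nat.card C ≤ 2 := by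
  haveI := Fintype.ofFinite C
  obtain ⟨g, hg⟩ := hc
  have hg' : ∀ x : C, x ∈ Subgroup.zpowers g := fun x => by
    obtain ⟨k, hk⟩ := hg x; exact ⟨k, hk⟩
  rw [← orderOf_eq_card_of_forall_mem_zpowers hg']
  exact Nat.le_of_dvd two_pos (orderOf_dvd_of_pow_eq_one (h2 g))

/-- No group surjecting onto `V` is metacyclic. -/
lemma not_metacyclic {G : Type*} [Group G] (f : G →* V) (hf : Function.Surjective f)
    (N : Subgroup G) (hN : N.Normal) (hNc : IsCyclic N) (hQc : IsCyclic (G ⧸ N)) : False := by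
  haveI := hN
  set K : Subgroup V := N.map f with hK
  have hKc : IsCyclic K := isCyclic_of_surjective _ (f.subgroupMap_surjective N)
  have hle : N ≤ K.comap f := fun x hx => Subgroup.mem_map_of_mem f hx
  let g : G ⧸ N →* V ⧸ K := QuotientGroup.map N K f hle
  have hgs : Function.Surjective g := by
    intro v
    induction v using QuotientGroup.induction_on with
    | H z =>
      obtain ⟨x, rfl⟩ := hf z
      exact ⟨QuotientGroup.mk x, QuotientGroup.map_mk N K f hle x⟩
  have hQ : IsCyclic (V ⧸ K) := isCyclic_of_surjective g hgs
  have hKsq : ∀ x : K, x ^ 2 = 1 := fun x => Subtype.ext (V_sq (x : V))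
  have hQsq : ∀ x : V ⧸ K, x ^ 2 = 1 := by
    intro x
    induction x using QuotientGroup.induction_on with
    | H z => rw [← QuotientGroup.mk_pow, V_sq]; rfl
  have h1 : Nat.card K ≤ 2 := cyclic_sq_card_le hKc hKsq
  have h2 : Nat.card (V ⧸ K) ≤ 2 := cyclic_sq_card_le hQ hQsq
  have := Subgroup.card_eq_card_quotient_mul_card_subgroup K
  rw [V_card] at this
  have hm := Nat.mul_le_mul h2 h1
  omega

end HolAux

/-- For `n ≥ 3`, `Hol(C_{2^n})` is metabelian (its commutator subgroup is abelian) but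
not metacyclic (there is no cyclic normal subgroup with cyclic quotient). -/
theorem stmt2 (n : ℕ) (hn : 3 ≤ n) :
    (∀ x ∈ commutator (Hol (2 ^ n)), ∀ y ∈ commutator (Hol (2 ^ n)), x * y = y * x) ∧
    ¬ ∃ (N : Subgroup (Hol (2 ^ n))) (_ : N.Normal),
        IsCyclic N ∧ IsCyclic (Hol (2 ^ n) ⧸ N) := by
  set m := 2 ^ n with hm
  haveI : NeZero m := ⟨pow_ne_zero n two_ne_zero⟩
  have h2 : 2 ∣ m := dvd_pow_self 2 (by omega)
  have h8 : 8 ∣ m := by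
    have := pow_dvd_pow 2 hn
    norm_num at this ⊢
    exact this
  constructor
  · -- metabelian
    intro x hx y hy
    let F : Hol m →* (ZMod m)ˣ :=
      (HolAux.autHom m).comp SemidirectProduct.rightHom
    have key : ∀ z ∈ commutator (Hol m), z.right = 1 := by
      intro z hz
      have hk : F z = 1 := Abelianization.commutator_subset_ker F hz
      have : HolAux.autHom m z.right = HolAux.autHom m 1 := by
        rw [map_one]; exact hk
      exact (HolAux.autHom_bijective m).1 this
    have hxr := key x hx
    have hyr := key y hy
    apply SemidirectProduct.ext
    · show (x * y).left = (y * x).left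
      have h1 : (x * y).left = x.left * x.right y.left := rfl
      have h2 : (y * x).left = y.left * y.right x.left := rfl
      rw [h1, h2, hxr, hyr]
      simpa using mul_comm x.left y.left
    · show (x * y).right = (y * x).right
      have h1 : (x * y).right = x.right * y.right := rfl
      have h2' : (y * x).right = y.right * x.right := rfl
      rw [h1, h2', hxr, hyr]
  · rintro ⟨N, hN, hNc, hQc⟩
    exact HolAux.not_metacyclic (HolAux.holHom m h2 h8)
      (HolAux.holHom_surjective m h2 h8) N hN hNc hQc
end

section
/- A finite group G has a faithful irreducible representation over a field F of characteristic 0 if and only if G has a faithful irreducible representation over an algebraic closure of F. -/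
open CategoryTheory


namespace Stmt3Aux

variable {k G : Type} [Field k] [Group G]

/-- restriction of a representation to an invariant submodule -/
def subRep {M : Type} [AddCommGroup M] [Module k M] (ρ : Representation k G M)
    (p : Submodule k M) (hp : ∀ g, ∀ v ∈ p, ρ g v ∈ p) : Representation k G p where
  toFun g := (ρ g).restrict (hp g)
  map_one' := by ext v; simp [LinearMap.restrict_apply]
  map_mul' g h := by ext v; simp [LinearMap.restrict_apply]

@[simp] lemma subRep_apply {M : Type} [AddCommGroup M] [Module k M] (ρ : Representation k G M)
    (p : Submodule k M) (hp : ∀ g, ∀ v ∈ p, ρ g v ∈ p) (g : G) (v : p) :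
    ((subRep ρ p hp g v : p) : M) = ρ g v := rfl

lemma hom_comm_apply' {X Y : FDRep k G} (f : X ⟶ Y) (g : G) (x : X) :
    f.hom (X.ρ g x) = Y.ρ g (f.hom x) :=
  by
    have h := f.comm g
    exact congrArg (fun (φ : X.V ⟶ Y.V) => φ.hom.hom x) h

end Stmt3Aux
namespace Stmt3Aux
variable {k G : Type} [Field k] [Group G]

lemma fdrep_eq_zero_iff {X Y : FDRep k G} (f : X ⟶ Y) : f = 0 ↔ ∀ x : X, f.hom x = 0 := by
  constructor
  · intro h x; rw [h, Action.zero_hom]; rfl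
  · intro h; apply Action.hom_ext; ext x; exact h x

lemma nontrivial_of_simple (V : FDRep k G) [Simple V] : Nontrivial V := by
  by_contra h
  rw [not_nontrivial_iff_subsingleton] at h
  have h0 : (𝟙 V : V ⟶ V) = 0 := by
    rw [fdrep_eq_zero_iff]; intro x; exact @Subsingleton.elim _ h _ _
  exact (Simple.mono_isIso_iff_nonzero (𝟙 V)).mp inferInstance h0

lemma invariant_eq (V : FDRep k G) [Simple V] (p : Submodule k V)
    (hp : ∀ g, ∀ v ∈ p, V.ρ g v ∈ p) : p = ⊥ ∨ p = ⊤ := by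
  by_cases hbot : p = ⊥
  · exact Or.inl hbot
  right
  let P : FDRep k G := FDRep.of (subRep V.ρ p hp)
  let ι : P ⟶ V := ⟨FGModuleCat.ofHom p.subtype, fun g => rfl⟩
  haveI : Mono ι := by
    rw [Preadditive.mono_iff_cancel_zero]
    intro Z g hg
    rw [fdrep_eq_zero_iff] at hg ⊢
    intro x
    have hx := hg x
    rw [Action.comp_hom] at hx
    exact Subtype.ext hx
  obtain ⟨v, hv, hv0⟩ := Submodule.exists_mem_ne_zero_of_ne_bot hbot
  have hne : ι ≠ 0 := fun h => hv0 ((fdrep_eq_zero_iff ι).mp h ⟨v, hv⟩)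
  haveI : IsIso ι := (Simple.mono_isIso_iff_nonzero ι).mpr hne
  rw [eq_top_iff]
  intro x _
  have h1 : ι.hom ((CategoryTheory.inv ι).hom x) = x := by
    have h2 := congrArg Action.Hom.hom (IsIso.inv_hom_id ι)
    rw [Action.comp_hom] at h2
    exact congrArg (fun (φ : V.V ⟶ V.V) => φ.hom.hom x) h2
  exact h1 ▸ ((CategoryTheory.inv ι).hom x).2

end Stmt3Aux
namespace Stmt3Aux
variable {k G : Type} [Field k] [Group G]

lemma simple_of (V : FDRep k G) (hnt : Nontrivial V)
    (h : ∀ p : Submodule k V, (∀ g, ∀ v ∈ p, V.ρ g v ∈ p) → p = ⊥ ∨ p = ⊤) : Simple V := by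
  constructor
  intro Y f hf
  constructor
  · intro hiso h0
    have hid : (𝟙 V : V ⟶ V) = 0 := by
      calc (𝟙 V : V ⟶ V) = inv f ≫ f := (IsIso.inv_hom_id f).symm
        _ = inv f ≫ 0 := congrArg (CategoryStruct.comp (inv f)) h0
        _ = 0 := Limits.comp_zero
    obtain ⟨x, y, hxy⟩ := hnt
    have hx := (fdrep_eq_zero_iff _).mp hid x
    have hy := (fdrep_eq_zero_iff _).mp hid y
    exact hxy (by rw [show x = (𝟙 V : V ⟶ V).hom x from rfl, hx, show y = (𝟙 V : V ⟶ V).hom y from rfl, hy])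
  · intro hf0
    set φ : Y →ₗ[k] V := ConcreteCategory.hom f.hom with hφ
    -- injectivity
    have hinj : Function.Injective φ := by
      rw [← LinearMap.ker_eq_bot]
      by_contra hker
      haveI := hf
      have hkinv : ∀ g, ∀ v ∈ LinearMap.ker φ, Y.ρ g v ∈ LinearMap.ker φ := by
        intro g v hv
        rw [LinearMap.mem_ker] at hv ⊢
        rw [show φ (Y.ρ g v) = V.ρ g (φ v) from hom_comm_apply' f g v, hv, map_zero]
      let K : FDRep k G := FDRep.of (subRep Y.ρ (LinearMap.ker φ) hkinv)
      let κ : K ⟶ Y := ⟨FGModuleCat.ofHom (LinearMap.ker φ).subtype, fun g => rfl⟩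
      have hκ0 : κ ≫ f = 0 := by
        rw [fdrep_eq_zero_iff]
        intro x
        rw [Action.comp_hom]
        exact x.2
      have := (Preadditive.mono_iff_cancel_zero f).mp hf K κ hκ0
      obtain ⟨v, hv, hv0⟩ := Submodule.exists_mem_ne_zero_of_ne_bot hker
      exact hv0 ((fdrep_eq_zero_iff κ).mp this ⟨v, hv⟩)
    -- surjectivity
    have hsur : Function.Surjective φ := by
      have hrinv : ∀ g, ∀ v ∈ LinearMap.range φ, V.ρ g v ∈ LinearMap.range φ := by
        rintro g v ⟨x, rfl⟩
        exact ⟨Y.ρ g x, hom_comm_apply' f g x⟩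
      rcases h (LinearMap.range φ) hrinv with hr | hr
      · exfalso
        apply hf0
        rw [fdrep_eq_zero_iff]
        intro x
        have : φ x ∈ LinearMap.range φ := ⟨x, rfl⟩
        rw [hr] at this
        simpa using this
      · rw [← LinearMap.range_eq_top]; exact hr
    let e : Y ≃ₗ[k] V := LinearEquiv.ofBijective φ ⟨hinj, hsur⟩
    have hcomm : ∀ g : G, e.symm.toLinearMap.comp (V.ρ g) = (Y.ρ g).comp e.symm.toLinearMap := by
      intro g
      apply LinearMap.ext
      intro x
      apply hinj
      show φ (e.symm (V.ρ g x)) = φ (Y.ρ g (e.symm x))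
      rw [show φ (Y.ρ g (e.symm x)) = V.ρ g (φ (e.symm x)) from hom_comm_apply' f g _]
      have h1 : φ (e.symm (V.ρ g x)) = V.ρ g x := e.apply_symm_apply _
      have h2 : φ (e.symm x) = x := e.apply_symm_apply _
      rw [h1, h2]
    let finv : V ⟶ Y := ⟨FGModuleCat.ofHom (e.symm.toLinearMap : V →ₗ[k] Y), fun g => by ext x; exact LinearMap.congr_fun (hcomm g) x⟩
    refine ⟨⟨finv, ?_, ?_⟩⟩
    · apply Action.hom_ext
      rw [Action.comp_hom]
      apply ConcreteCategory.hom_ext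
      intro x
      exact e.symm_apply_apply x
    · apply Action.hom_ext
      rw [Action.comp_hom]
      apply ConcreteCategory.hom_ext
      intro x
      exact e.apply_symm_apply x

end Stmt3Aux
namespace Stmt3Aux
variable {k G : Type} [Field k] [Group G]

lemma exists_minimal_invariant {M : Type} [AddCommGroup M] [Module k M] [FiniteDimensional k M]
    (hM : Nontrivial M) (ρ : Representation k G M) :
    ∃ p : Submodule k M, (∀ g, ∀ v ∈ p, ρ g v ∈ p) ∧ p ≠ ⊥ ∧
      ∀ q : Submodule k M, q ≤ p → (∀ g, ∀ v ∈ q, ρ g v ∈ q) → q ≠ ⊥ → q = p := by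
  set S : Set ℕ := {n | ∃ p : Submodule k M, (∀ g, ∀ v ∈ p, ρ g v ∈ p) ∧ p ≠ ⊥ ∧
    Module.finrank k p = n} with hS
  have hne : S.Nonempty := ⟨Module.finrank k (⊤ : Submodule k M),
    ⟨⊤, fun _ _ _ => trivial, top_ne_bot, rfl⟩⟩
  obtain ⟨p, hinv, hbot, hrank⟩ := Nat.sInf_mem hne
  refine ⟨p, hinv, hbot, fun q hqp hqinv hqbot => ?_⟩
  by_contra hne'
  have hlt : q < p := lt_of_le_of_ne hqp hne'
  have h1 : Module.finrank k q < Module.finrank k p :=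
    Submodule.finrank_lt_finrank_of_lt hlt
  have h2 : Module.finrank k q ∈ S := ⟨q, hqinv, hqbot, rfl⟩
  have := Nat.sInf_le h2
  omega

lemma simple_sub {M : Type} [AddCommGroup M] [Module k M] [FiniteDimensional k M]
    (ρ : Representation k G M)
    (p : Submodule k M) (hp : ∀ g, ∀ v ∈ p, ρ g v ∈ p) (hpb : p ≠ ⊥)
    (hmin : ∀ q : Submodule k M, q ≤ p → (∀ g, ∀ v ∈ q, ρ g v ∈ q) → q ≠ ⊥ → q = p) :
    Simple (FDRep.of (subRep ρ p hp)) := by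
  apply simple_of
  · exact (Submodule.nontrivial_iff_ne_bot).mpr hpb
  · intro q hq
    set q' : Submodule k M := q.map p.subtype with hq'
    have hq'le : q' ≤ p := by
      rintro _ ⟨v, _, rfl⟩; exact v.2
    have hq'inv : ∀ g, ∀ v ∈ q', ρ g v ∈ q' := by
      rintro g _ ⟨v, hv, rfl⟩
      exact ⟨subRep ρ p hp g v, hq g v hv, rfl⟩
    by_cases hb : q' = ⊥
    · left
      apply Submodule.map_injective_of_injective p.injective_subtype
      rw [← hq', hb, Submodule.map_bot]
    · right
      have := hmin q' hq'le hq'inv hb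
      apply Submodule.map_injective_of_injective p.injective_subtype
      rw [← hq', this, Submodule.map_top, Submodule.range_subtype]

end Stmt3Aux
namespace Stmt3Aux

lemma forward (F : Type) [Field F] [CharZero F] (G : Type) [Group G] [Finite G]
    (V : FDRep F G) [Simple V] (hV : Function.Injective V.ρ) :
    ∃ W : FDRep (AlgebraicClosure F) G, Simple W ∧ Function.Injective W.ρ := by
  classical
  set A := AlgebraicClosure F with hA
  haveI : CharZero A := charZero_of_injective_algebraMap (algebraMap F A).injective
  haveI hVnt : Nontrivial V := nontrivial_of_simple V
  set ρ' : Representation A G (TensorProduct F A V) :=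
    (Module.End.baseChangeHom F A V).toMonoidHom.comp V.ρ with hρ'
  haveI : Module.Finite A (TensorProduct F A V) := inferInstance
  have hnt : Nontrivial (TensorProduct F A V) := by
    have h1 : 0 < Module.finrank A (TensorProduct F A V) := by
      rw [Module.finrank_baseChange]
      exact Module.finrank_pos
    exact Module.nontrivial_of_finrank_pos h1
  obtain ⟨p, hpinv, hpb, hpmin⟩ := exists_minimal_invariant hnt ρ'
  refine ⟨_, simple_sub ρ' p hpinv hpb hpmin, ?_⟩
  set ρW := subRep ρ' p hpinv with hρW
  set N : Subgroup G := MonoidHom.ker (ρW : G →* (p →ₗ[A] p)) with hN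
  haveI : Fintype ↥N := Fintype.ofFinite _
  set s : V →ₗ[F] V := ∑ n : N, V.ρ (n : G) with hs
  have hfix : ∀ n ∈ N, ∀ v ∈ p, ρ' n v = v := by
    intro n hn v hv
    have h1 : ρW n = 1 := hn
    have h2 := congrArg (fun f => ((f ⟨v, hv⟩ : p) : TensorProduct F A V)) h1
    exact h2
  have hs0 : s ≠ 0 := by
    intro h0
    obtain ⟨v, hv, hvne⟩ := Submodule.exists_mem_ne_zero_of_ne_bot hpb
    have hbc : (LinearMap.baseChange A s) v = (Fintype.card ↥N) • v := by
      have he : LinearMap.baseChange A s = ∑ n : N, LinearMap.baseChange A (V.ρ (n : G)) := by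
        rw [hs]
        exact map_sum (LinearMap.baseChangeHom F A V V) _ _
      rw [he, LinearMap.sum_apply]
      have hv' : ∀ n : N, (LinearMap.baseChange A (V.ρ (n : G))) v = v :=
        fun n => hfix n n.2 v hv
      rw [Finset.sum_congr rfl (fun n _ => hv' n), Finset.sum_const, Finset.card_univ]
    rw [h0] at hbc
    simp only [LinearMap.baseChange_zero, LinearMap.zero_apply] at hbc
    have h3 : ((Fintype.card ↥N : ℕ) : A) • v = 0 := by
      rw [Nat.cast_smul_eq_nsmul]; exact hbc.symm
    rw [smul_eq_zero] at h3
    rcases h3 with h | h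
    · exact Nat.cast_ne_zero.mpr Fintype.card_ne_zero h
    · exact hvne h
  haveI hNn : N.Normal := MonoidHom.normal_ker _
  have hcomm : ∀ g : G, (V.ρ g) * s = s * (V.ρ g) := by
    intro g
    rw [hs, Finset.mul_sum, Finset.sum_mul]
    let e : ↥N ≃ ↥N :=
      ⟨fun n => (⟨g * (n : G) * g⁻¹, hNn.conj_mem _ n.2 g⟩ : N),
       fun n => (⟨g⁻¹ * (n : G) * g, by simpa using hNn.conj_mem _ n.2 g⁻¹⟩ : N),
       fun n => by ext : 1; show g⁻¹ * (g * (n : G) * g⁻¹) * g = (n : G); group,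
       fun n => by ext : 1; show g * (g⁻¹ * (n : G) * g) * g⁻¹ = (n : G); group⟩
    refine Fintype.sum_equiv e _ _ ?_
    intro n
    show V.ρ g * V.ρ (n : G) = V.ρ (g * (n : G) * g⁻¹) * V.ρ g
    rw [← map_mul, ← map_mul]
    congr 1
    group
  have hleft : ∀ m ∈ N, (V.ρ m) * s = s := by
    intro m hm
    conv_rhs => rw [hs]
    rw [hs, Finset.mul_sum]
    let e : ↥N ≃ ↥N :=
      ⟨fun n => (⟨m * (n : G), N.mul_mem hm n.2⟩ : N),
       fun n => (⟨m⁻¹ * (n : G), N.mul_mem (N.inv_mem hm) n.2⟩ : N),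
       fun n => by ext : 1; show m⁻¹ * (m * (n : G)) = (n : G); group,
       fun n => by ext : 1; show m * (m⁻¹ * (n : G)) = (n : G); group⟩
    refine Fintype.sum_equiv e _ _ ?_
    intro n
    show V.ρ m * V.ρ (n : G) = V.ρ (m * (n : G))
    rw [← map_mul]
  have hrange : LinearMap.range s = ⊤ := by
    have hinv : ∀ g, ∀ v ∈ LinearMap.range s, V.ρ g v ∈ LinearMap.range s := by
      rintro g _ ⟨x, rfl⟩
      refine ⟨V.ρ g x, ?_⟩
      show (s * V.ρ g) x = (V.ρ g * s) x
      rw [hcomm g]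
    rcases invariant_eq V (LinearMap.range s) hinv with h | h
    · exact absurd (LinearMap.range_eq_bot.mp h) hs0
    · exact h
  have hss : s * s = (Fintype.card ↥N) • s := by
    have h1 : s * s = ∑ n : N, (V.ρ (n : G)) * s := by
      conv_lhs => rw [hs]
      exact Finset.sum_mul _ _ s
    rw [h1]
    rw [show (∑ n : ↥N, V.ρ (n : G) * s) = ∑ _n : ↥N, s from
      Finset.sum_congr rfl (fun n _ => hleft (n : G) n.2)]
    rw [Finset.sum_const, Finset.card_univ]
  have hsv : ∀ v : V, s v = (Fintype.card ↥N) • v := by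
    intro v
    obtain ⟨x, rfl⟩ := LinearMap.range_eq_top.mp hrange v
    have h1 := congrArg (fun f : V →ₗ[F] V => f x) hss
    simpa using h1
  have hone : ∀ m ∈ N, V.ρ m = 1 := by
    intro m hm
    ext v
    have h1 : V.ρ m (s v) = s v := by
      rw [← Module.End.mul_apply, hleft m hm]
    rw [hsv v] at h1
    have h2 : ((Fintype.card ↥N : ℕ) : F) • (V.ρ m v - v) = 0 := by
      rw [smul_sub, sub_eq_zero]
      rw [map_nsmul, ← Nat.cast_smul_eq_nsmul F, ← Nat.cast_smul_eq_nsmul F] at h1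
      exact h1
    rw [smul_eq_zero] at h2
    rcases h2 with h | h
    · exact absurd h (Nat.cast_ne_zero.mpr Fintype.card_ne_zero)
    · simpa [sub_eq_zero] using h
  intro g h hgh
  have hgh' : ρW g = ρW h := hgh
  have hm : h⁻¹ * g ∈ N := by
    show ρW (h⁻¹ * g) = 1
    rw [map_mul, hgh', ← map_mul, inv_mul_cancel, map_one]
  have h1 := hV (show V.ρ (h⁻¹ * g) = V.ρ 1 by rw [hone _ hm, map_one])
  rw [inv_mul_eq_one] at h1
  exact h1.symm

end Stmt3Aux
namespace Stmt3Aux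

lemma backward (F : Type) [Field F] [CharZero F] (G : Type) [Group G] [Finite G]
    (W : FDRep (AlgebraicClosure F) G) [Simple W] (hW : Function.Injective W.ρ) :
    ∃ V : FDRep F G, Simple V ∧ Function.Injective V.ρ := by
  classical
  set A := AlgebraicClosure F with hA
  letI : Module F W := Module.compHom W (algebraMap F A)
  letI : IsScalarTower F A W := ⟨fun x y z => by
    show (x • y) • z = algebraMap F A x • (y • z)
    rw [Algebra.smul_def, mul_smul]⟩
  set ρF : Representation F G W :=
    { toFun := fun g => LinearMap.restrictScalars F (W.ρ g)
      map_one' := by ext x; simp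
      map_mul' := fun g h => by ext x; simp } with hρF
  haveI : Nontrivial W := nontrivial_of_simple W
  obtain ⟨w, hw⟩ := exists_ne (0 : W)
  set V₀ : Submodule F W := Submodule.span F (Set.range fun g : G => W.ρ g w) with hV₀
  haveI : FiniteDimensional F V₀ := FiniteDimensional.span_of_finite F (Set.finite_range _)
  have hV₀inv : ∀ g : G, ∀ v ∈ V₀, ρF g v ∈ V₀ := by
    intro g v hv
    refine Submodule.span_induction ?_ ?_ ?_ ?_ hv
    · rintro _ ⟨g', rfl⟩
      apply Submodule.subset_span
      refine ⟨g * g', ?_⟩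
      show W.ρ (g * g') w = ρF g (W.ρ g' w)
      rw [map_mul]
      rfl
    · rw [map_zero]; exact Submodule.zero_mem _
    · intro x y _ _ hx hy
      rw [map_add]; exact Submodule.add_mem _ hx hy
    · intro a x _ hx
      rw [map_smul]; exact Submodule.smul_mem _ _ hx
  have hwV₀ : w ∈ V₀ := Submodule.subset_span ⟨1, by simp⟩
  haveI hV₀nt : Nontrivial ↥V₀ :=
    ⟨⟨w, hwV₀⟩, 0, fun h => hw (congrArg Subtype.val h)⟩
  set ρ₀ : Representation F G ↥V₀ := subRep ρF V₀ hV₀inv with hρ₀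
  obtain ⟨p, hpinv, hpb, hpmin⟩ := exists_minimal_invariant hV₀nt ρ₀
  refine ⟨FDRep.of (subRep ρ₀ p hpinv), simple_sub ρ₀ p hpinv hpb hpmin, ?_⟩
  intro g h hgh
  have hgh' : subRep ρ₀ p hpinv g = subRep ρ₀ p hpinv h := hgh
  set m := h⁻¹ * g with hm
  -- elements of p are fixed by m
  have hfix : ∀ x : ↥p, W.ρ m (((x : ↥V₀) : W)) = ((x : ↥V₀) : W) := by
    intro x
    have h1 : ρF g (((x : ↥V₀) : W)) = ρF h (((x : ↥V₀) : W)) := by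
      have h0 := congrArg (fun f => (((f x : ↥p) : ↥V₀) : W)) hgh'
      simp only [subRep_apply] at h0
      rw [hρ₀] at h0
      simp only [subRep_apply] at h0
      exact h0
    have h2 : W.ρ g (((x : ↥V₀) : W)) = W.ρ h (((x : ↥V₀) : W)) := h1
    show W.ρ (h⁻¹ * g) _ = _
    rw [map_mul]
    show W.ρ h⁻¹ (W.ρ g _) = _
    rw [h2, ← Module.End.mul_apply, ← map_mul, inv_mul_cancel, map_one]
    rfl
  -- the A-span of p is invariant and nonzero
  set U : Submodule A W := Submodule.span A (Set.range fun x : ↥p => ((x : ↥V₀) : W)) with hU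
  have hUinv : ∀ g' : G, ∀ v ∈ U, W.ρ g' v ∈ U := by
    intro g' v hv
    refine Submodule.span_induction ?_ ?_ ?_ ?_ hv
    · rintro _ ⟨x, rfl⟩
      apply Submodule.subset_span
      exact ⟨subRep ρ₀ p hpinv g' x, rfl⟩
    · rw [map_zero]; exact Submodule.zero_mem _
    · intro x y _ _ hx hy
      rw [map_add]; exact Submodule.add_mem _ hx hy
    · intro a x _ hx
      rw [map_smul]; exact Submodule.smul_mem _ _ hx
  have hUtop : U = ⊤ := by
    rcases invariant_eq W U hUinv with h | h
    · exfalso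
      obtain ⟨v, hv, hv0⟩ := Submodule.exists_mem_ne_zero_of_ne_bot hpb
      have : ((⟨v, hv⟩ : ↥p) : ↥V₀).val ∈ U := Submodule.subset_span ⟨⟨v, hv⟩, rfl⟩
      rw [h, Submodule.mem_bot] at this
      exact hv0 (by
        apply Subtype.ext
        exact this)
    · exact h
  -- hence m acts trivially on all of W
  have hall : ∀ y : W, W.ρ m y = y := by
    intro y
    have hy : y ∈ U := hUtop ▸ Submodule.mem_top
    refine Submodule.span_induction ?_ ?_ ?_ ?_ hy
    · rintro _ ⟨x, rfl⟩; exact hfix x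
    · rw [map_zero]
    · intro a b _ _ ha hb; rw [map_add, ha, hb]
    · intro a x _ hx; rw [map_smul, hx]
  have h1 := hW (show W.ρ m = W.ρ 1 by
    ext y; rw [map_one]; exact hall y)
  rw [hm, inv_mul_eq_one] at h1
  exact h1.symm

end Stmt3Aux


/-- A finite group `G` has a faithful irreducible representation over a field `F` of
characteristic `0` if and only if it has one over an algebraic closure of `F`. -/
theorem stmt3 (F : Type) [Field F] [CharZero F] (G : Type) [Group G] [Finite G] :
    (∃ V : FDRep F G, Simple V ∧ Function.Injective V.ρ) ↔
      (∃ W : FDRep (AlgebraicClosure F) G, Simple W ∧ Function.Injective W.ρ) := by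
  constructor
  · rintro ⟨V, hs, hf⟩
    haveI := hs
    exact Stmt3Aux.forward F G V hf
  · rintro ⟨W, hs, hf⟩
    haveI := hs
    exact Stmt3Aux.backward F G W hf
end

section
/- For p an odd prime and n ≥ 1, the number of conjugacy classes (equivalently, the number of inequivalent irreducible complex representations) of Hol(C_{p^n}) equals (1 + p + p² + ⋯ + p^n) − p^{n-1}. -/
namespace HolAux

set_option linter.unusedSectionVars false

variable {m : ℕ}

/-- The multiplier of an automorphism of `Multiplicative (ZMod m)`. -/
def av (α : MulAut (Multiplicative (ZMod m))) : ZMod m :=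
  (α (Multiplicative.ofAdd 1)).toAdd

lemma av_spec (α : MulAut (Multiplicative (ZMod m))) (x : Multiplicative (ZMod m)) :
    (α x).toAdd = av α * x.toAdd := by
  rw [mul_comm, ← ZMod.intCast_zmod_cast x.toAdd, ← zsmul_eq_mul,
    show av α = (α (Multiplicative.ofAdd 1)).toAdd from rfl, ← toAdd_zpow, ← map_zpow]
  congr 1
  rw [← ofAdd_toAdd x]
  congr 1
  rw [← ofAdd_zsmul]
  congr 1
  rw [zsmul_eq_mul, mul_one, ZMod.intCast_zmod_cast]
  rw [toAdd_ofAdd]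

lemma av_one : av (1 : MulAut (Multiplicative (ZMod m))) = 1 := rfl

lemma av_mul (α β : MulAut (Multiplicative (ZMod m))) : av (α * β) = av α * av β := by
  have : av (α * β) = (α (β (Multiplicative.ofAdd 1))).toAdd := rfl
  rw [this, av_spec]; rfl

lemma av_isUnit (α : MulAut (Multiplicative (ZMod m))) : IsUnit (av α) :=
  IsUnit.of_mul_eq_one (av α⁻¹) (by rw [← av_mul, mul_inv_cancel, av_one])

lemma av_injective : Function.Injective (av (m := m)) := by
  intro α β h
  apply MulEquiv.ext
  intro x
  have h1 := av_spec α x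
  have h2 := av_spec β x
  rw [← ofAdd_toAdd (α x), ← ofAdd_toAdd (β x), h1, h2, h]

lemma mulAut_conj (α β : MulAut (Multiplicative (ZMod m))) : β * α * β⁻¹ = α := by
  apply av_injective
  rw [av_mul, av_mul]
  have : av β * av β⁻¹ = 1 := by rw [← av_mul, mul_inv_cancel, av_one]
  rw [mul_comm (av β) (av α), mul_assoc, this, mul_one]

/-- The equivalence between automorphisms and units. -/
def U (m : ℕ) : MulAut (Multiplicative (ZMod m)) ≃ (ZMod m)ˣ :=
  MulEquiv.toAdditive.trans (ZMod.AddAutEquivUnits m).toEquiv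

lemma coe_U (α : MulAut (Multiplicative (ZMod m))) : ((U m α : (ZMod m)ˣ) : ZMod m) = av α := rfl

lemma av_U_symm (w : (ZMod m)ˣ) : av ((U m).symm w) = (w : ZMod m) := by
  rw [← coe_U, (U m).apply_symm_apply]

section gcd

variable [NeZero m]

lemma exists_of_cast_eq_zero {k : ℕ} (hk : k ∣ m) (z : ZMod m)
    (h : ZMod.castHom hk (ZMod k) z = 0) : ∃ t : ZMod m, z = (k : ZMod m) * t := by
  haveI : NeZero k := ⟨fun h0 => (NeZero.ne m) (by simpa [h0] using hk)⟩
  have hz : (z.val : ZMod k) = 0 := by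
    rwa [ZMod.natCast_val, ← ZMod.castHom_apply (h := hk)]
  rw [ZMod.natCast_eq_zero_iff] at hz
  obtain ⟨t, ht⟩ := hz
  refine ⟨(t : ZMod m), ?_⟩
  rw [← ZMod.natCast_zmod_val z, ht]
  push_cast
  ring

lemma mul_eq_mul_of_cast_eq {d : ℕ} (hd : d ∣ m) (y y' : ZMod m)
    (h : ZMod.castHom (Nat.div_dvd_of_dvd hd) (ZMod (m / d)) y =
      ZMod.castHom (Nat.div_dvd_of_dvd hd) (ZMod (m / d)) y') :
    (d : ZMod m) * y = (d : ZMod m) * y' := by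
  obtain ⟨t, ht⟩ := exists_of_cast_eq_zero (Nat.div_dvd_of_dvd hd) (y - y')
    (by rw [map_sub, h, sub_self])
  have h2 : (d : ZMod m) * (y - y') = 0 := by
    rw [ht, ← mul_assoc, ← Nat.cast_mul, Nat.mul_div_cancel' hd, ZMod.natCast_self, zero_mul]
  rw [mul_sub] at h2
  linear_combination h2

/-- Every element of `ZMod m` is a unit times the gcd of its value with `m`. -/
lemma exists_unit_mul_gcd (x : ZMod m) :
    ∃ w : (ZMod m)ˣ, x = (w : ZMod m) * (Nat.gcd m x.val : ZMod m) := by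
  set d := Nat.gcd m x.val with hd
  have hdm : d ∣ m := Nat.gcd_dvd_left _ _
  have hdpos : 0 < d := Nat.gcd_pos_of_pos_left _ (NeZero.pos m)
  have hcop : (m / d).Coprime (x.val / d) := Nat.coprime_div_gcd_div_gcd hdpos
  haveI : NeZero (m / d) := ⟨Nat.div_ne_zero_iff_of_dvd hdm |>.mpr ⟨NeZero.ne m, hdpos.ne'⟩⟩
  obtain ⟨w, hw⟩ := ZMod.unitsMap_surjective (Nat.div_dvd_of_dvd hdm)
    (ZMod.unitOfCoprime (x.val / d) hcop.symm)
  refine ⟨w, ?_⟩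
  have hx : x = ((x.val / d : ℕ) : ZMod m) * (d : ZMod m) := by
    rw [← Nat.cast_mul, Nat.div_mul_cancel (Nat.gcd_dvd_right m x.val), ZMod.natCast_zmod_val]
  rw [hx, mul_comm ((w : ZMod m)) _, mul_comm _ ((d : ZMod m))]
  apply mul_eq_mul_of_cast_eq hdm
  have := congrArg (fun u : (ZMod (m / d))ˣ => (u : ZMod (m / d))) hw
  simp only [ZMod.unitsMap_def, Units.coe_map, MonoidHom.coe_coe] at this
  rw [this]
  simp [ZMod.coe_unitOfCoprime, map_natCast]

lemma gcd_val_unit_mul (w : (ZMod m)ˣ) (x : ZMod m) :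
    Nat.gcd m ((w * x : ZMod m).val) = Nat.gcd m x.val := by
  rw [ZMod.val_mul]
  rw [Nat.gcd_comm m _, ← Nat.gcd_rec, Nat.gcd_comm,
    Nat.Coprime.gcd_mul_left_cancel x.val (ZMod.val_coe_unit_coprime w), Nat.gcd_comm]

lemma gcd_cast {k : ℕ} (hk : k ∣ m) [NeZero k] (x : ZMod m) :
    Nat.gcd k ((ZMod.castHom hk (ZMod k) x).val) = Nat.gcd k x.val := by
  rw [ZMod.castHom_apply, ← ZMod.natCast_val, ZMod.val_natCast]
  rw [Nat.gcd_comm k _, ← Nat.gcd_rec, Nat.gcd_comm]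

lemma gcd_reindex (a c : ZMod m) :
    Nat.gcd (Nat.gcd m a.val) c.val =
      Nat.gcd (Nat.gcd m c.val)
        ((ZMod.castHom (Nat.gcd_dvd_left m c.val) (ZMod (Nat.gcd m c.val)) a).val) := by
  haveI : NeZero (Nat.gcd m c.val) := ⟨(Nat.gcd_pos_of_pos_left _ (NeZero.pos m)).ne'⟩
  rw [gcd_cast, Nat.gcd_assoc, Nat.gcd_comm a.val c.val, ← Nat.gcd_assoc]

lemma cast_c_eq_zero (c : ZMod m) :
    ZMod.castHom (Nat.gcd_dvd_left m c.val) (ZMod (Nat.gcd m c.val)) c = 0 := by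
  haveI : NeZero (Nat.gcd m c.val) := ⟨(Nat.gcd_pos_of_pos_left _ (NeZero.pos m)).ne'⟩
  rw [ZMod.castHom_apply, ← ZMod.natCast_val, ZMod.natCast_eq_zero_iff]
  exact Nat.gcd_dvd_right _ _

lemma key_gcd (w a b c : ZMod m) (hw : IsUnit w) :
    Nat.gcd (Nat.gcd m ((w * a + c * b).val)) c.val = Nat.gcd (Nat.gcd m a.val) c.val := by
  haveI : NeZero (Nat.gcd m c.val) := ⟨(Nat.gcd_pos_of_pos_left _ (NeZero.pos m)).ne'⟩
  set π := ZMod.castHom (Nat.gcd_dvd_left m c.val) (ZMod (Nat.gcd m c.val)) with hπ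
  rw [gcd_reindex, gcd_reindex a c]
  have h1 : π (w * a + c * b) = (hw.map π).unit * π a := by
    rw [map_add, map_mul, map_mul, cast_c_eq_zero, zero_mul, add_zero, IsUnit.unit_spec]
  rw [h1, gcd_val_unit_mul]

lemma key_exists (a a' c : ZMod m)
    (h : Nat.gcd (Nat.gcd m a.val) c.val = Nat.gcd (Nat.gcd m a'.val) c.val) :
    ∃ (w : (ZMod m)ˣ) (b : ZMod m), a' = (w : ZMod m) * a + c * b := by
  haveI : NeZero (Nat.gcd m c.val) := ⟨(Nat.gcd_pos_of_pos_left _ (NeZero.pos m)).ne'⟩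
  set gc := Nat.gcd m c.val with hgc
  set π := ZMod.castHom (Nat.gcd_dvd_left m c.val) (ZMod gc) with hπ
  rw [gcd_reindex, gcd_reindex a' c] at h
  obtain ⟨w1, hw1⟩ := exists_unit_mul_gcd (π a)
  obtain ⟨w2, hw2⟩ := exists_unit_mul_gcd (π a')
  obtain ⟨w, hw⟩ := ZMod.unitsMap_surjective (n := gc) (Nat.gcd_dvd_left m c.val) (w2 * w1⁻¹)
  have hcoe : π (w : ZMod m) = ((w2 * w1⁻¹ : (ZMod gc)ˣ) : ZMod gc) := by
    have := congrArg (fun u : (ZMod gc)ˣ => (u : ZMod gc)) hw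
    simpa [ZMod.unitsMap_def, hπ] using this
  have key : π a' = ((w2 * w1⁻¹ : (ZMod gc)ˣ) : ZMod gc) * π a := by
    calc π a' = (w2 : ZMod gc) * ((gc.gcd (π a).val : ℕ) : ZMod gc) := by rw [hw2, ← h]
      _ = ((w2 * w1⁻¹ : (ZMod gc)ˣ) : ZMod gc) *
          ((w1 : ZMod gc) * ((gc.gcd (π a).val : ℕ) : ZMod gc)) := by
        rw [Units.val_mul, mul_assoc, ← mul_assoc ((w1⁻¹ : (ZMod gc)ˣ) : ZMod gc),
          Units.inv_mul, one_mul]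
      _ = ((w2 * w1⁻¹ : (ZMod gc)ˣ) : ZMod gc) * π a := by rw [← hw1]
  have hker : π (a' - (w : ZMod m) * a) = 0 := by
    rw [map_sub, map_mul, hcoe, key, sub_self]
  obtain ⟨t, ht⟩ := exists_of_cast_eq_zero (Nat.gcd_dvd_left m c.val) _ hker
  obtain ⟨e, he⟩ : ∃ e : ZMod m, (gc : ZMod m) = c * e := by
    refine ⟨((Nat.gcdB m c.val : ℤ) : ZMod m), ?_⟩
    have hb := Nat.gcd_eq_gcd_ab m c.val
    have h2 : ((gc : ℤ) : ZMod m) =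
        ((m * Nat.gcdA m c.val + c.val * Nat.gcdB m c.val : ℤ) : ZMod m) := by
      exact_mod_cast congrArg (fun z : ℤ => ((z : ℤ) : ZMod m)) hb
    push_cast at h2
    rwa [ZMod.natCast_self, zero_mul, zero_add, ZMod.natCast_zmod_val] at h2
  refine ⟨w, e * t, ?_⟩
  have : a' - (w : ZMod m) * a = c * (e * t) := by
    rw [ht, he]; ring
  linear_combination this

end gcd

/-- The conjugacy invariant. -/
def K (g : Hol m) : ℕ :=
  Nat.gcd (Nat.gcd m ((Multiplicative.toAdd g.left).val)) ((1 - av g.right).val)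

lemma conj_right (h g : Hol m) : (h * g * h⁻¹).right = g.right := by
  simp only [SemidirectProduct.mul_right, SemidirectProduct.inv_right]
  exact mulAut_conj g.right h.right

lemma conj_left (h g : Hol m) :
    (Multiplicative.toAdd (h * g * h⁻¹).left) =
      av h.right * (Multiplicative.toAdd g.left) +
        (1 - av g.right) * (Multiplicative.toAdd h.left) := by
  have e1 : (h * g * h⁻¹).left =
      h.left * h.right g.left * ((h.right * g.right * h.right⁻¹) h.left⁻¹) := by
    simp only [SemidirectProduct.mul_left, SemidirectProduct.inv_left,
      MonoidHom.id_apply, SemidirectProduct.mul_right, map_mul, MulAut.mul_apply]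
  rw [e1, mulAut_conj]
  rw [toAdd_mul, toAdd_mul, av_spec h.right, av_spec g.right, toAdd_inv]
  ring

theorem isConj_iff_inv [NeZero m] (g g' : Hol m) :
    IsConj g g' ↔ g.right = g'.right ∧ K g = K g' := by
  constructor
  · rintro hc
    obtain ⟨c, rfl⟩ := isConj_iff.mp hc
    refine ⟨(conj_right c g).symm, ?_⟩
    unfold K
    rw [conj_right, conj_left]
    rw [key_gcd _ _ _ _ (av_isUnit c.right)]
  · rintro ⟨hr, hK⟩
    unfold K at hK
    rw [← hr] at hK
    obtain ⟨w, b, hab⟩ := key_exists _ _ _ hK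
    rw [isConj_iff]
    refine ⟨⟨Multiplicative.ofAdd b, (U m).symm w⟩, SemidirectProduct.ext ?_ ?_⟩
    · apply Multiplicative.toAdd.injective
      rw [conj_left]
      show av ((U m).symm w) * _ + _ = _
      rw [av_U_symm]
      simp only [toAdd_ofAdd]
      exact hab.symm
    · rw [conj_right]; exact hr

/-- The parameter space for conjugacy classes. -/
def T (m : ℕ) := {q : MulAut (Cyc m) × ℕ // q.2 ∣ Nat.gcd m ((1 - av q.1).val)}

lemma K_mem (g : Hol m) : K g ∣ Nat.gcd m ((1 - av g.right).val) :=
  Nat.dvd_gcd ((Nat.gcd_dvd_left _ _).trans (Nat.gcd_dvd_left _ _)) (Nat.gcd_dvd_right _ _)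

variable (m) in
noncomputable def inv1 [NeZero m] : ConjClasses (Hol m) → T m :=
  Quotient.lift (fun g : Hol m => (⟨(g.right, K g), K_mem g⟩ : T m))
    (fun g g' (h : IsConj g g') => by
      obtain ⟨h1, h2⟩ := (isConj_iff_inv g g').mp h
      exact Subtype.ext (Prod.ext h1 h2))

lemma inv1_bijective [NeZero m] : Function.Bijective (inv1 m) := by
  constructor
  · intro q q'
    induction q using Quotient.inductionOn with | h g =>
    induction q' using Quotient.inductionOn with | h g' =>
    intro h
    have h' : (g.right, K g) = (g'.right, K g') := congrArg Subtype.val h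
    exact Quotient.sound ((isConj_iff_inv g g').mpr ⟨congrArg Prod.fst h', congrArg Prod.snd h'⟩)
  · rintro ⟨⟨α, t⟩, ht⟩
    have htm : t ∣ m := ht.trans (Nat.gcd_dvd_left _ _)
    refine ⟨Quotient.mk _ (⟨Multiplicative.ofAdd (t : ZMod m), α⟩ : Hol m), ?_⟩
    apply Subtype.ext
    refine Prod.ext rfl ?_
    show K _ = t
    unfold K
    show Nat.gcd (Nat.gcd m ((Multiplicative.toAdd (Multiplicative.ofAdd (t : ZMod m))).val))
        ((1 - av α).val) = t
    rw [toAdd_ofAdd, ZMod.val_natCast, Nat.gcd_comm m (t % m), ← Nat.gcd_rec,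
      Nat.gcd_eq_right htm, Nat.gcd_eq_left (ht.trans (Nat.gcd_dvd_right _ _))]

/-- The gcd attached to a unit. -/
def G (m : ℕ) (u : (ZMod m)ˣ) : ℕ := Nat.gcd m ((1 - (u : ZMod m)).val)

lemma card_T [NeZero m] : Nat.card (T m) = ∑ u : (ZMod m)ˣ, (G m u).divisors.card := by
  have hGpos : ∀ u : (ZMod m)ˣ, G m u ≠ 0 :=
    fun u => (Nat.gcd_pos_of_pos_left _ (NeZero.pos m)).ne'
  haveI fib : ∀ u : (ZMod m)ˣ, Fintype {t : ℕ // t ∣ G m u} := fun u =>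
    Fintype.ofFinset (G m u).divisors
      (fun t => Nat.mem_divisors.trans (and_iff_left (hGpos u)))
  have e1 : T m ≃ {q : (ZMod m)ˣ × ℕ // q.2 ∣ G m q.1} := by
    refine Equiv.subtypeEquiv (Equiv.prodCongr (U m) (Equiv.refl ℕ)) (fun q => ?_)
    simp only [Equiv.prodCongr_apply, Prod.map, Equiv.refl_apply]
    rw [G, coe_U]
  have e2 : {q : (ZMod m)ˣ × ℕ // q.2 ∣ G m q.1} ≃ Σ u : (ZMod m)ˣ, {t : ℕ // t ∣ G m u} :=
    ⟨fun q => ⟨q.1.1, ⟨q.1.2, q.2⟩⟩, fun s => ⟨(s.1, s.2.1), s.2.2⟩,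
      fun q => rfl, fun s => rfl⟩
  rw [Nat.card_congr (e1.trans e2), Nat.card_eq_fintype_card, Fintype.card_sigma]
  apply Finset.sum_congr rfl
  intro u _
  exact Fintype.card_of_subtype (G m u).divisors
    (fun t => Nat.mem_divisors.trans (and_iff_left (hGpos u)))

section count

variable (p n : ℕ) (hp : p.Prime) (hn : 1 ≤ n)
include hp hn

lemma divisors_card_eq (x : ℕ) (hx : x ∣ p ^ n) :
    x.divisors.card = ∑ j ∈ Finset.range (n + 1), if p ^ j ∣ x then 1 else 0 := by
  obtain ⟨k, hk, rfl⟩ := (Nat.dvd_prime_pow hp).mp hx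
  rw [Nat.divisors_prime_pow hp, Finset.card_map, Finset.card_range, Finset.sum_boole]
  have : (Finset.range (n + 1)).filter (fun j => p ^ j ∣ p ^ k) = Finset.range (k + 1) := by
    ext j
    simp only [Finset.mem_filter, Finset.mem_range,
      Nat.pow_dvd_pow_iff_le_right hp.one_lt]
    omega
  rw [this, Finset.card_range]
  simp

lemma ker_card (j : ℕ) (h1 : 1 ≤ j) (hjn : j ≤ n) :
    Nat.card (MonoidHom.ker (ZMod.unitsMap (pow_dvd_pow p hjn))) = p ^ (n - j) := by
  haveI : NeZero (p ^ n) := ⟨pow_ne_zero _ hp.pos.ne'⟩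
  haveI : NeZero (p ^ j) := ⟨pow_ne_zero _ hp.pos.ne'⟩
  set μ := ZMod.unitsMap (pow_dvd_pow p hjn)
  have hsurj : Function.Surjective μ := ZMod.unitsMap_surjective _
  have hcards := Subgroup.card_eq_card_quotient_mul_card_subgroup (MonoidHom.ker μ)
  rw [Nat.card_congr (QuotientGroup.quotientKerEquivOfSurjective μ hsurj).toEquiv] at hcards
  have h1' : Nat.card (ZMod (p ^ n))ˣ = p ^ (n - 1) * (p - 1) := by
    rw [Nat.card_eq_fintype_card, ZMod.card_units_eq_totient, Nat.totient_prime_pow hp hn]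
  have h2' : Nat.card (ZMod (p ^ j))ˣ = p ^ (j - 1) * (p - 1) := by
    rw [Nat.card_eq_fintype_card, ZMod.card_units_eq_totient, Nat.totient_prime_pow hp h1]
  rw [h1', h2'] at hcards
  have hpos : 0 < p ^ (j - 1) * (p - 1) :=
    Nat.mul_pos (Nat.pow_pos hp.pos) (by have := hp.one_lt; omega)
  have h4 : (p ^ (j - 1) * (p - 1)) * Nat.card (MonoidHom.ker μ) =
      (p ^ (j - 1) * (p - 1)) * p ^ (n - j) := by
    rw [← hcards, show n - 1 = (j - 1) + (n - j) from by omega, pow_add]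
    ring
  exact Nat.eq_of_mul_eq_mul_left hpos h4

lemma count_main [NeZero (p ^ n)] :
    (∑ u : (ZMod (p ^ n))ˣ, (G (p ^ n) u).divisors.card) =
      (∑ i ∈ Finset.range (n + 1), p ^ i) - p ^ (n - 1) := by
  have step1 : ∀ u : (ZMod (p ^ n))ˣ, (G (p ^ n) u).divisors.card =
      ∑ j ∈ Finset.range (n + 1), if p ^ j ∣ G (p ^ n) u then 1 else 0 :=
    fun u => divisors_card_eq p n hp hn _ (Nat.gcd_dvd_left _ _)
  simp only [step1]
  rw [Finset.sum_comm]
  have inner0 : (∑ u : (ZMod (p ^ n))ˣ, if p ^ 0 ∣ G (p ^ n) u then 1 else 0)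
      = p ^ n - p ^ (n - 1) := by
    simp only [pow_zero, one_dvd, if_true, Finset.sum_const, smul_eq_mul, mul_one]
    rw [Finset.card_univ, ZMod.card_units_eq_totient, Nat.totient_prime_pow hp hn,
      Nat.mul_sub, mul_one, ← pow_succ, show n - 1 + 1 = n from by omega]
  have innerj : ∀ j, 1 ≤ j → (hjn : j ≤ n) →
      (∑ u : (ZMod (p ^ n))ˣ, if p ^ j ∣ G (p ^ n) u then 1 else 0) = p ^ (n - j) := by
    intro j h1 hjn
    haveI : NeZero (p ^ j) := ⟨pow_ne_zero _ hp.pos.ne'⟩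
    set μ := ZMod.unitsMap (pow_dvd_pow p hjn)
    have hcond : ∀ u : (ZMod (p ^ n))ˣ, (p ^ j ∣ G (p ^ n) u ↔ μ u = 1) := by
      intro u
      rw [G]
      rw [Nat.dvd_gcd_iff]
      constructor
      · rintro ⟨-, h2⟩
        apply Units.ext
        have : ((1 - (u : ZMod (p ^ n))).val : ZMod (p ^ j)) = 0 :=
          (ZMod.natCast_eq_zero_iff _ _).mpr h2
        rw [ZMod.natCast_val] at this
        have h3 : ZMod.castHom (pow_dvd_pow p hjn) (ZMod (p ^ j)) (1 - (u : ZMod (p ^ n))) = 0 :=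
          this
        rw [map_sub, map_one, sub_eq_zero] at h3
        show ((ZMod.castHom (pow_dvd_pow p hjn) (ZMod (p ^ j))) (u : ZMod (p ^ n))) = 1
        exact h3.symm
      · intro h2
        refine ⟨pow_dvd_pow p hjn, ?_⟩
        rw [← ZMod.natCast_eq_zero_iff]
        rw [ZMod.natCast_val]
        show ZMod.castHom (pow_dvd_pow p hjn) (ZMod (p ^ j)) (1 - (u : ZMod (p ^ n))) = 0
        rw [map_sub, map_one, sub_eq_zero]
        have := congrArg (fun w : (ZMod (p ^ j))ˣ => (w : ZMod (p ^ j))) h2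
        simpa [μ, ZMod.unitsMap_def] using this.symm
    simp only [hcond]
    rw [Finset.sum_boole]
    push_cast
    rw [← ker_card p n hp hn j h1 hjn]
    rw [Nat.card_eq_fintype_card]
    rw [Fintype.card_subtype]
    congr 1
    apply Finset.filter_congr
    intro u _
    simp [μ, MonoidHom.mem_ker]
  rw [Finset.sum_range_succ' _ n]
  have hre : ∀ j ∈ Finset.range n,
      (∑ u : (ZMod (p ^ n))ˣ, if p ^ (j + 1) ∣ G (p ^ n) u then 1 else 0) = p ^ (n - (j + 1)) :=
    fun j hj => innerj (j + 1) (by omega) (by simp at hj; omega)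
  rw [Finset.sum_congr rfl hre, inner0]
  have hrefl : ∑ j ∈ Finset.range n, p ^ (n - (j + 1)) = ∑ i ∈ Finset.range n, p ^ i := by
    rw [← Finset.sum_range_reflect]
    apply Finset.sum_congr rfl
    intro i hi
    simp at hi
    congr 1
    omega
  rw [hrefl, Finset.sum_range_succ]
  have hle : p ^ (n - 1) ≤ p ^ n := Nat.pow_le_pow_right hp.pos (by omega)
  have hpn : p ^ (n - 1) * p = p ^ n := by rw [← pow_succ]; congr 1; omega
  have hms : p ^ (n - 1) * (p - 1) = p ^ n - p ^ (n - 1) := by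
    rw [Nat.mul_sub, mul_one, hpn]
  omega

end count
end HolAux

/-- For an odd prime `p` and `n ≥ 1`, the number of conjugacy classes (equivalently,
the number of inequivalent irreducible complex representations) of `Hol(C_{p^n})`
equals `(1 + p + ⋯ + p^n) - p^{n-1}`. -/
theorem stmt8 (p n : ℕ) (hp : p.Prime) (hodd : Odd p) (hn : 1 ≤ n) :
    Nat.card (ConjClasses (Hol (p ^ n))) =
      (∑ i ∈ Finset.range (n + 1), p ^ i) - p ^ (n - 1) := by
  haveI : NeZero (p ^ n) := ⟨pow_ne_zero _ hp.pos.ne'⟩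
  rw [Nat.card_eq_of_bijective (HolAux.inv1 (p ^ n)) HolAux.inv1_bijective,
    HolAux.card_T, HolAux.count_main p n hp hn]
end

section
/- For n ≥ 3, the number of conjugacy classes (equivalently, the number of inequivalent irreducible complex representations) of Hol(C_{2^n}) equals (1 + 2 + 2² + ⋯ + 2^n) − 2^{n-1}. -/
namespace Stmt9Aux

instance (n : ℕ) : NeZero (2 ^ n) := ⟨pow_ne_zero n two_ne_zero⟩

variable (n : ℕ)

/-! ### automorphisms and units -/

def toU (ρ : MulAut (Cyc (2 ^ n))) : ZMod (2 ^ n) :=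
  Multiplicative.toAdd (ρ (Multiplicative.ofAdd 1))

lemma aut_apply (ρ : MulAut (Cyc (2 ^ n))) (x : ZMod (2 ^ n)) :
    ρ (Multiplicative.ofAdd x) = Multiplicative.ofAdd (toU n ρ * x) := by
  obtain ⟨m, rfl⟩ : ∃ m : ℕ, (m : ZMod (2 ^ n)) = x := ⟨x.val, ZMod.natCast_rightInverse x⟩
  have h1 : (Multiplicative.ofAdd ((m : ZMod (2 ^ n)))) =
      (Multiplicative.ofAdd (1 : ZMod (2 ^ n))) ^ m := by
    rw [← ofAdd_nsmul]
    congr 1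
    simp [nsmul_eq_mul]
  rw [h1, map_pow]
  have h2 : ρ (Multiplicative.ofAdd (1 : ZMod (2 ^ n))) = Multiplicative.ofAdd (toU n ρ) := by
    rw [toU, ofAdd_toAdd]
  rw [h2, ← ofAdd_nsmul]
  congr 1
  rw [nsmul_eq_mul]
  ring

lemma aut_apply' (ρ : MulAut (Cyc (2 ^ n))) (x : Cyc (2 ^ n)) :
    ρ x = Multiplicative.ofAdd (toU n ρ * Multiplicative.toAdd x) := by
  conv_lhs => rw [← ofAdd_toAdd x]
  rw [aut_apply]

lemma toU_mul (ρ σ : MulAut (Cyc (2 ^ n))) : toU n (ρ * σ) = toU n ρ * toU n σ := by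
  unfold toU
  rw [MulAut.mul_apply, aut_apply' n σ, aut_apply]
  simp [toU]

lemma toU_one : toU n 1 = 1 := by simp [toU]

lemma toU_injective : Function.Injective (toU n) := by
  intro ρ σ h
  ext x
  rw [aut_apply' n ρ, aut_apply' n σ, h]

def unitOf (ρ : MulAut (Cyc (2 ^ n))) : (ZMod (2 ^ n))ˣ :=
  ⟨toU n ρ, toU n ρ⁻¹, by rw [← toU_mul, mul_inv_cancel, toU_one],
    by rw [← toU_mul, inv_mul_cancel, toU_one]⟩

def autOf (v : (ZMod (2 ^ n))ˣ) : MulAut (Cyc (2 ^ n)) where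
  toFun x := Multiplicative.ofAdd ((v : ZMod (2 ^ n)) * Multiplicative.toAdd x)
  invFun x := Multiplicative.ofAdd (((v⁻¹ : (ZMod (2 ^ n))ˣ) : ZMod (2 ^ n)) * Multiplicative.toAdd x)
  left_inv x := by simp [← mul_assoc]
  right_inv x := by simp [← mul_assoc]
  map_mul' x y := by
    simp [toAdd_mul, mul_add, ofAdd_add]

lemma toU_autOf (v : (ZMod (2 ^ n))ˣ) : toU n (autOf n v) = v := by
  simp [toU, autOf]

lemma unitOf_autOf (v : (ZMod (2 ^ n))ˣ) : unitOf n (autOf n v) = v :=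
  Units.ext (toU_autOf n v)

/-! ### valuation -/

def val (x : ZMod (2 ^ n)) : ℕ := if x = 0 then n else (x.val).factorization 2

lemma two_pow_n_eq_zero : (2 : ZMod (2 ^ n)) ^ n = 0 := by
  have : ((2 ^ n : ℕ) : ZMod (2 ^ n)) = 0 := ZMod.natCast_self _
  push_cast at this
  exact this

lemma val_le (x : ZMod (2 ^ n)) : val n x ≤ n := by
  by_cases hx : x = 0
  · simp [val, hx]
  · rw [val, if_neg hx]
    have hv : x.val ≠ 0 := fun h => hx ((ZMod.val_eq_zero x).mp h)
    have hd : 2 ^ (x.val.factorization 2) ∣ x.val := Nat.ordProj_dvd _ _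
    have hlt : x.val < 2 ^ n := ZMod.val_lt x
    have := Nat.le_of_dvd (Nat.pos_of_ne_zero hv) hd
    have h2 : 2 ^ (x.val.factorization 2) < 2 ^ n := lt_of_le_of_lt this hlt
    exact le_of_lt ((Nat.pow_lt_pow_iff_right one_lt_two).mp h2)

lemma exists_unit (x : ZMod (2 ^ n)) :
    ∃ w : (ZMod (2 ^ n))ˣ, x = 2 ^ (val n x) * w := by
  by_cases hx : x = 0
  · refine ⟨1, ?_⟩
    rw [hx, val, if_pos rfl, two_pow_n_eq_zero]
    simp
  · have hv : x.val ≠ 0 := fun h => hx ((ZMod.val_eq_zero x).mp h)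
    set v := x.val.factorization 2 with hv'
    have hsplit : 2 ^ v * (x.val / 2 ^ v) = x.val := Nat.ordProj_mul_ordCompl_eq_self _ _
    have hodd : ¬ 2 ∣ (x.val / 2 ^ v) := Nat.not_dvd_ordCompl Nat.prime_two hv
    have hcop : Nat.Coprime (x.val / 2 ^ v) (2 ^ n) :=
      Nat.Coprime.pow_right n
        (Nat.coprime_comm.mp ((Nat.Prime.coprime_iff_not_dvd Nat.prime_two).mpr hodd))
    refine ⟨ZMod.unitOfCoprime _ hcop, ?_⟩
    rw [val, if_neg hx]
    have : ((x.val : ℕ) : ZMod (2 ^ n)) = x := ZMod.natCast_rightInverse x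
    conv_lhs => rw [← this, ← hsplit]
    push_cast [ZMod.coe_unitOfCoprime]
    ring

lemma pow_dvd_iff {j : ℕ} (hj : j ≤ n) (x : ZMod (2 ^ n)) :
    (2 : ZMod (2 ^ n)) ^ j ∣ x ↔ j ≤ val n x := by
  constructor
  · rintro ⟨y, hy⟩
    by_cases hx : x = 0
    · rw [val, if_pos hx]; exact hj
    · rw [val, if_neg hx]
      have hv : x.val ≠ 0 := fun h => hx ((ZMod.val_eq_zero x).mp h)
      have hcast : ((x.val : ℕ) : ZMod (2 ^ n)) = ((2 ^ j * y.val : ℕ) : ZMod (2 ^ n)) := by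
        push_cast
        rw [ZMod.natCast_rightInverse x, ZMod.natCast_rightInverse y, ← hy]
      have hmod : x.val ≡ 2 ^ j * y.val [MOD 2 ^ n] := (ZMod.natCast_eq_natCast_iff _ _ _).mp hcast
      have hmod2 : x.val ≡ 2 ^ j * y.val [MOD 2 ^ j] := hmod.of_dvd (pow_dvd_pow 2 hj)
      have hdvd : 2 ^ j ∣ x.val := by
        have h0 : (2 ^ j * y.val) ≡ 0 [MOD 2 ^ j] :=
          Nat.modEq_zero_iff_dvd.mpr (dvd_mul_right _ _)
        exact Nat.modEq_zero_iff_dvd.mp (hmod2.trans h0)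
      exact (Nat.Prime.pow_dvd_iff_le_factorization Nat.prime_two hv).mp hdvd
  · intro h
    obtain ⟨w, hw⟩ := exists_unit n x
    refine ⟨2 ^ (val n x - j) * w, ?_⟩
    conv_lhs => rw [hw]
    rw [← mul_assoc, ← pow_add, Nat.add_sub_cancel' h]

lemma val_eq_of_dvd_iff {x y : ZMod (2 ^ n)}
    (h : ∀ j ≤ n, ((2 : ZMod (2 ^ n)) ^ j ∣ x ↔ (2 : ZMod (2 ^ n)) ^ j ∣ y)) :
    val n x = val n y := by
  have h1 : val n x ≤ val n y := by
    rw [← pow_dvd_iff n (val_le n x), ← h _ (val_le n x), pow_dvd_iff n (val_le n x)]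
  have h2 : val n y ≤ val n x := by
    rw [← pow_dvd_iff n (val_le n y), h _ (val_le n y), pow_dvd_iff n (val_le n y)]
  omega

lemma val_unit_mul (v : (ZMod (2 ^ n))ˣ) (x : ZMod (2 ^ n)) :
    val n ((v : ZMod (2 ^ n)) * x) = val n x := by
  refine val_eq_of_dvd_iff n (fun j _ => ⟨fun h => ?_, fun h => Dvd.dvd.mul_left h _⟩)
  have := h.mul_left ((v⁻¹ : (ZMod (2 ^ n))ˣ) : ZMod (2 ^ n))
  rwa [← mul_assoc, Units.inv_mul, one_mul] at this

lemma min_val_add {k : ℕ} (hk : k ≤ n) {x y : ZMod (2 ^ n)}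
    (hy : (2 : ZMod (2 ^ n)) ^ k ∣ y) :
    min (val n (x + y)) k = min (val n x) k := by
  have key : ∀ j ≤ k, ((2 : ZMod (2 ^ n)) ^ j ∣ x + y ↔ (2 : ZMod (2 ^ n)) ^ j ∣ x) := by
    intro j hj
    have hjy : (2 : ZMod (2 ^ n)) ^ j ∣ y := dvd_trans (pow_dvd_pow 2 hj) hy
    constructor
    · intro h
      have := dvd_sub h hjy
      simpa using this
    · exact fun h => dvd_add h hjy
  have h1 : min (val n (x + y)) k ≤ min (val n x) k := by
    have hj : min (val n (x + y)) k ≤ k := min_le_right _ _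
    have hd : (2 : ZMod (2 ^ n)) ^ (min (val n (x + y)) k) ∣ x + y :=
      (pow_dvd_iff n (le_trans hj hk) _).mpr (min_le_left _ _)
    have := (pow_dvd_iff n (le_trans hj hk) _).mp ((key _ hj).mp hd)
    omega
  have h2 : min (val n x) k ≤ min (val n (x + y)) k := by
    have hj : min (val n x) k ≤ k := min_le_right _ _
    have hd : (2 : ZMod (2 ^ n)) ^ (min (val n x) k) ∣ x :=
      (pow_dvd_iff n (le_trans hj hk) _).mpr (min_le_left _ _)
    have := (pow_dvd_iff n (le_trans hj hk) _).mp ((key _ hj).mpr hd)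
    omega
  omega

lemma val_two_pow {j : ℕ} (hj : j ≤ n) : val n ((2 : ZMod (2 ^ n)) ^ j) = j := by
  rcases eq_or_lt_of_le hj with rfl | hjn
  · rw [two_pow_n_eq_zero, val, if_pos rfl]
  · have hcast : ((2 ^ j : ℕ) : ZMod (2 ^ n)) = (2 : ZMod (2 ^ n)) ^ j := by push_cast; ring
    have hvv : ((2 : ZMod (2 ^ n)) ^ j).val = 2 ^ j := by
      rw [← hcast, ZMod.val_cast_of_lt (Nat.pow_lt_pow_right one_lt_two hjn)]
    have hne : (2 : ZMod (2 ^ n)) ^ j ≠ 0 := by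
      intro h
      rw [h, ZMod.val_zero] at hvv
      exact absurd hvv.symm (pow_ne_zero j two_ne_zero)
    rw [val, if_neg hne, hvv, Nat.Prime.factorization_pow Nat.prime_two]
    simp

/-! ### conjugation -/

def cInv (g : Hol (2 ^ n)) : (ZMod (2 ^ n))ˣ × ℕ :=
  (unitOf n g.right,
    min (val n (Multiplicative.toAdd g.left)) (val n (1 - toU n g.right)))

lemma conj_right (c g : Hol (2 ^ n)) : (c * g * c⁻¹).right = g.right := by
  rw [SemidirectProduct.mul_right, SemidirectProduct.mul_right, SemidirectProduct.inv_right]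
  apply toU_injective n
  rw [toU_mul, toU_mul]
  have h : toU n c.right * toU n c.right⁻¹ = 1 := by
    rw [← toU_mul, mul_inv_cancel, toU_one]
  linear_combination toU n g.right * h

lemma conj_left (c g : Hol (2 ^ n)) :
    Multiplicative.toAdd (c * g * c⁻¹).left =
      toU n c.right * Multiplicative.toAdd g.left
        + (1 - toU n g.right) * Multiplicative.toAdd c.left := by
  have h : toU n c.right * toU n c.right⁻¹ = 1 := by
    rw [← toU_mul, mul_inv_cancel, toU_one]
  simp only [SemidirectProduct.mul_left, SemidirectProduct.mul_right,
    SemidirectProduct.inv_left, MonoidHom.id_apply, aut_apply', toAdd_mul, toAdd_ofAdd,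
    toAdd_inv, toU_mul]
  linear_combination (-(toU n g.right * Multiplicative.toAdd c.left)) * h

lemma cInv_conj (c g : Hol (2 ^ n)) : cInv n (c * g * c⁻¹) = cInv n g := by
  unfold cInv
  rw [conj_right]
  refine Prod.ext rfl ?_
  simp only
  rw [conj_left]
  have hk : val n (1 - toU n g.right) ≤ n := val_le n _
  have hdvd : (2 : ZMod (2 ^ n)) ^ (val n (1 - toU n g.right)) ∣
      (1 - toU n g.right) * Multiplicative.toAdd c.left :=
    Dvd.dvd.mul_right ((pow_dvd_iff n hk _).mpr le_rfl) _
  rw [min_val_add n hk hdvd]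
  have : toU n c.right = ((unitOf n c.right : (ZMod (2 ^ n))ˣ) : ZMod (2 ^ n)) := rfl
  rw [this, val_unit_mul]

lemma isConj_of_cInv_eq {g h : Hol (2 ^ n)} (e : cInv n g = cInv n h) : IsConj g h := by
  have e1 : unitOf n g.right = unitOf n h.right := congrArg Prod.fst e
  have hr : g.right = h.right := toU_injective n (congrArg Units.val e1)
  have e2 : min (val n (Multiplicative.toAdd g.left)) (val n (1 - toU n g.right))
      = min (val n (Multiplicative.toAdd h.left)) (val n (1 - toU n g.right)) := by
    have := congrArg Prod.snd e
    simp only [cInv] at this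
    rw [hr] at this ⊢
    exact this
  rw [isConj_iff]
  set u := toU n g.right with hu
  set A := Multiplicative.toAdd g.left with hA
  set A' := Multiplicative.toAdd h.left with hA'
  set k := val n (1 - u) with hkdef
  have hkn : k ≤ n := val_le n _
  have key : ∃ (v : (ZMod (2 ^ n))ˣ) (B : ZMod (2 ^ n)),
      (v : ZMod (2 ^ n)) * A + (1 - u) * B = A' := by
    by_cases hcase : val n A < k
    · have hA'' : val n A' = val n A := by omega
      obtain ⟨w1, hw1⟩ := exists_unit n A
      obtain ⟨w2, hw2⟩ := exists_unit n A'
      refine ⟨w2 * w1⁻¹, 0, ?_⟩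
      rw [hw1, hw2, hA'']
      have hinv : ((w1⁻¹ : (ZMod (2 ^ n))ˣ) : ZMod (2 ^ n)) * w1 = 1 := w1.inv_mul
      rw [Units.val_mul]
      linear_combination ((2 : ZMod (2 ^ n)) ^ val n A * (w2 : ZMod (2 ^ n))) * hinv
    · have h1 : k ≤ val n A := not_lt.mp hcase
      have h2 : k ≤ val n A' := by omega
      obtain ⟨c0, hc0⟩ := dvd_sub ((pow_dvd_iff n hkn A').mpr h2) ((pow_dvd_iff n hkn A).mpr h1)
      obtain ⟨w, hw⟩ := exists_unit n (1 - u)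
      rw [← hkdef] at hw
      refine ⟨1, ((w⁻¹ : (ZMod (2 ^ n))ˣ) : ZMod (2 ^ n)) * c0, ?_⟩
      have hinv : ((w : (ZMod (2 ^ n))ˣ) : ZMod (2 ^ n)) * ((w⁻¹ : (ZMod (2 ^ n))ˣ) : ZMod (2 ^ n)) = 1 := w.mul_inv
      rw [Units.val_one]
      linear_combination (((w⁻¹ : (ZMod (2 ^ n))ˣ) : ZMod (2 ^ n)) * c0) * hw
        + ((2 : ZMod (2 ^ n)) ^ k * c0) * hinv - hc0
  obtain ⟨v, B, hvB⟩ := key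
  refine ⟨⟨Multiplicative.ofAdd B, autOf n v⟩, ?_⟩
  have hright : ((⟨Multiplicative.ofAdd B, autOf n v⟩ : Hol (2 ^ n)) * g *
      (⟨Multiplicative.ofAdd B, autOf n v⟩ : Hol (2 ^ n))⁻¹).right = h.right := by
    rw [conj_right, hr]
  have hleft : ((⟨Multiplicative.ofAdd B, autOf n v⟩ : Hol (2 ^ n)) * g *
      (⟨Multiplicative.ofAdd B, autOf n v⟩ : Hol (2 ^ n))⁻¹).left = h.left := by
    have := conj_left n (⟨Multiplicative.ofAdd B, autOf n v⟩ : Hol (2 ^ n)) g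
    apply Multiplicative.toAdd.injective
    rw [this]
    simp only [toU_autOf, toAdd_ofAdd]
    exact hvB
  exact SemidirectProduct.ext hleft hright

end Stmt9Aux

namespace Stmt9Aux

variable (n : ℕ)

/-! ### the classification -/

def T : Type :=
  Σ u : (ZMod (2 ^ n))ˣ, Fin (val n (1 - (u : ZMod (2 ^ n))) + 1)

noncomputable instance : Fintype (T n) := by unfold T; infer_instance

lemma T_ext {a1 a2 : (ZMod (2 ^ n))ˣ} {b1 : Fin (val n (1 - (a1 : ZMod (2 ^ n))) + 1)}
    {b2 : Fin (val n (1 - (a2 : ZMod (2 ^ n))) + 1)} (h1 : a1 = a2) (h2 : (b1 : ℕ) = (b2 : ℕ)) :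
    (⟨a1, b1⟩ : T n) = ⟨a2, b2⟩ := by
  subst h1
  exact congrArg _ (Fin.ext h2)

def f (g : Hol (2 ^ n)) : T n :=
  ⟨unitOf n g.right,
    ⟨min (val n (Multiplicative.toAdd g.left)) (val n (1 - toU n g.right)),
      Nat.lt_succ_of_le (min_le_right _ _)⟩⟩

lemma f_eq_iff (g h : Hol (2 ^ n)) : f n g = f n h ↔ cInv n g = cInv n h := by
  unfold f cInv
  constructor
  · intro e
    have e1 : unitOf n g.right = unitOf n h.right := congrArg Sigma.fst e
    have hr : g.right = h.right := toU_injective n (congrArg Units.val e1)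
    rw [Prod.mk.injEq]
    refine ⟨e1, ?_⟩
    have := congrArg (fun p : T n => (p.2 : ℕ)) e
    simpa [hr] using this
  · intro e
    have e1 : unitOf n g.right = unitOf n h.right := congrArg Prod.fst e
    have hr : g.right = h.right := toU_injective n (congrArg Units.val e1)
    have e2 := congrArg Prod.snd e
    simp only at e2
    refine T_ext n e1 ?_
    simp only
    rw [hr]
    rwa [hr] at e2

noncomputable def E : ConjClasses (Hol (2 ^ n)) ≃ T n := by
  refine Equiv.ofBijective (Quotient.lift (f n) ?_) ⟨?_, ?_⟩
  · intro a b hab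
    obtain ⟨c, hc⟩ := isConj_iff.mp (hab : IsConj a b)
    rw [f_eq_iff, ← hc, cInv_conj]
  · intro a b
    refine Quotient.inductionOn₂ a b ?_
    intro g h e
    exact Quotient.sound ((isConj_of_cInv_eq n ((f_eq_iff n g h).mp e)) : IsConj g h)
  · rintro ⟨u, j, hj⟩
    refine ⟨Quotient.mk _ (⟨Multiplicative.ofAdd ((2 : ZMod (2 ^ n)) ^ (j : ℕ)), autOf n u⟩ : Hol (2 ^ n)), ?_⟩
    have hju : (j : ℕ) ≤ val n (1 - (u : ZMod (2 ^ n))) := Nat.lt_succ_iff.mp hj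
    have hjn : (j : ℕ) ≤ n := le_trans hju (val_le n _)
    unfold f
    show (⟨_, _⟩ : T n) = _
    refine T_ext n (unitOf_autOf n u) ?_
    simp only [toAdd_ofAdd, toU_autOf, val_two_pow n hjn]
    exact min_eq_left hju

end Stmt9Aux

namespace Stmt9Aux

variable (n : ℕ)

/-! ### counting -/

lemma not_two_dvd_one (hn1 : 1 ≤ n) : ¬ (2 : ZMod (2 ^ n)) ∣ 1 := by
  intro h
  haveI : Fact (1 < 2 ^ n) := ⟨by
    calc 1 < 2 ^ 1 := one_lt_two
    _ ≤ 2 ^ n := Nat.pow_le_pow_right two_pos hn1⟩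
  have h1 : (1 : ZMod (2 ^ n)) ≠ 0 := one_ne_zero
  have hval : val n (1 : ZMod (2 ^ n)) = 0 := by
    rw [val, if_neg h1, ZMod.val_one]
    simp
  have := (pow_dvd_iff n hn1 (1 : ZMod (2 ^ n))).mp (by rwa [pow_one])
  omega

lemma isUnit_of_not_two_dvd (hn1 : 1 ≤ n) {y : ZMod (2 ^ n)}
    (h : ¬ (2 : ZMod (2 ^ n)) ∣ y) : IsUnit y := by
  have hval : val n y = 0 := by
    by_contra hv
    exact h (by
      have := (pow_dvd_iff n hn1 y).mpr (Nat.one_le_iff_ne_zero.mpr hv)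
      rwa [pow_one] at this)
  obtain ⟨w, hw⟩ := exists_unit n y
  rw [hval, pow_zero, one_mul] at hw
  exact hw ▸ w.isUnit

lemma card_dvd_subtype {m : ℕ} (hm1 : 1 ≤ m) (hmn : m ≤ n) :
    Nat.card {u : (ZMod (2 ^ n))ˣ // (2 : ZMod (2 ^ n)) ^ m ∣ 1 - (u : ZMod (2 ^ n))} =
      2 ^ (n - m) := by
  have hn1 : 1 ≤ n := le_trans hm1 hmn
  have hunit : ∀ x : ZMod (2 ^ n), (2 : ZMod (2 ^ n)) ^ m ∣ x → IsUnit (1 - x) := by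
    intro x hx
    refine isUnit_of_not_two_dvd n hn1 ?_
    intro h2
    have hx2 : (2 : ZMod (2 ^ n)) ∣ x :=
      dvd_trans (dvd_pow_self 2 (Nat.one_le_iff_ne_zero.mp hm1)) hx
    exact not_two_dvd_one n hn1 (by simpa using dvd_add h2 hx2)
  have e1 : {u : (ZMod (2 ^ n))ˣ // (2 : ZMod (2 ^ n)) ^ m ∣ 1 - (u : ZMod (2 ^ n))} ≃
      {x : ZMod (2 ^ n) // (2 : ZMod (2 ^ n)) ^ m ∣ x} :=
    { toFun := fun u => ⟨1 - (u.1 : ZMod (2 ^ n)), u.2⟩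
      invFun := fun x => ⟨(hunit x.1 x.2).unit, by
        rw [IsUnit.unit_spec, sub_sub_cancel]; exact x.2⟩
      left_inv := fun u => Subtype.ext (Units.ext (by simp [IsUnit.unit_spec])),
      right_inv := fun x => Subtype.ext (by simp [IsUnit.unit_spec]) }
  have hc : ((2 ^ m : ℕ) : ZMod (2 ^ n)) = (2 : ZMod (2 ^ n)) ^ m := by push_cast; ring
  have e2 : {x : ZMod (2 ^ n) // (2 : ZMod (2 ^ n)) ^ m ∣ x} ≃
      AddSubgroup.zmultiples ((2 ^ m : ℕ) : ZMod (2 ^ n)) := by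
    refine Equiv.subtypeEquivRight (fun x => ?_)
    rw [AddSubgroup.mem_zmultiples_iff, hc]
    constructor
    · rintro ⟨c, rfl⟩
      obtain ⟨z, rfl⟩ := ZMod.intCast_surjective c
      exact ⟨z, by rw [zsmul_eq_mul]; ring⟩
    · rintro ⟨z, rfl⟩
      exact ⟨(z : ZMod (2 ^ n)), by rw [zsmul_eq_mul]; ring⟩
  rw [Nat.card_congr (e1.trans e2), Nat.card_zmultiples,
    ZMod.addOrderOf_coe _ (NeZero.ne (2 ^ n)), Nat.gcd_comm,
    Nat.gcd_eq_left (pow_dvd_pow 2 hmn), Nat.pow_div hmn two_pos]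

lemma sum_two_pow (M : ℕ) : ∑ j ∈ Finset.range M, 2 ^ j = 2 ^ M - 1 := by
  induction M with
  | zero => simp
  | succ m ih =>
    rw [Finset.sum_range_succ, ih]
    have : 1 ≤ 2 ^ m := Nat.one_le_two_pow
    have : 2 ^ (m + 1) = 2 * 2 ^ m := by ring
    omega

end Stmt9Aux


open Stmt9Aux

/-- For `n ≥ 3`, the number of conjugacy classes (equivalently, the number of
inequivalent irreducible complex representations) of `Hol(C_{2^n})` equals
`(1 + 2 + ⋯ + 2^n) - 2^{n-1}`. -/
theorem stmt9 (n : ℕ) (hn : 3 ≤ n) :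
    Nat.card (ConjClasses (Hol (2 ^ n))) =
      (∑ i ∈ Finset.range (n + 1), 2 ^ i) - 2 ^ (n - 1) := by
  classical
  have hn1 : 1 ≤ n := by omega
  -- step 1
  have hcard : Nat.card (ConjClasses (Hol (2 ^ n))) =
      ∑ u : (ZMod (2 ^ n))ˣ, (val n (1 - (u : ZMod (2 ^ n))) + 1) := by
    rw [Nat.card_congr (E n), Nat.card_eq_fintype_card]
    unfold T
    rw [Fintype.card_sigma]
    simp
  rw [hcard]
  rw [Finset.sum_add_distrib]
  -- number of units
  have hunits : ∑ _u : (ZMod (2 ^ n))ˣ, 1 = 2 ^ (n - 1) := by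
    rw [Finset.sum_const, smul_eq_mul, mul_one, ← Fintype.card,
      ZMod.card_units_eq_totient, Nat.totient_prime_pow Nat.prime_two (by omega)]
    simp
  -- sum of valuations
  have hval : ∑ u : (ZMod (2 ^ n))ˣ, val n (1 - (u : ZMod (2 ^ n))) = 2 ^ n - 1 := by
    have hsplit : ∀ u : (ZMod (2 ^ n))ˣ,
        val n (1 - (u : ZMod (2 ^ n))) =
          ∑ j ∈ Finset.range n, if j + 1 ≤ val n (1 - (u : ZMod (2 ^ n))) then 1 else 0 := by
      intro u
      rw [Finset.sum_ite, Finset.sum_const, Finset.sum_const]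
      have hfil : (Finset.range n).filter (fun j => j + 1 ≤ val n (1 - (u : ZMod (2 ^ n))))
          = Finset.range (val n (1 - (u : ZMod (2 ^ n)))) := by
        ext j
        simp only [Finset.mem_filter, Finset.mem_range]
        have := val_le n (1 - (u : ZMod (2 ^ n)))
        omega
      rw [hfil]
      simp
    calc ∑ u : (ZMod (2 ^ n))ˣ, val n (1 - (u : ZMod (2 ^ n)))
        = ∑ u : (ZMod (2 ^ n))ˣ, ∑ j ∈ Finset.range n,
            if j + 1 ≤ val n (1 - (u : ZMod (2 ^ n))) then 1 else 0 := by
          exact Finset.sum_congr rfl (fun u _ => hsplit u)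
      _ = ∑ j ∈ Finset.range n, ∑ u : (ZMod (2 ^ n))ˣ,
            if j + 1 ≤ val n (1 - (u : ZMod (2 ^ n))) then 1 else 0 := Finset.sum_comm
      _ = ∑ j ∈ Finset.range n, (2 : ℕ) ^ (n - (j + 1)) := by
          refine Finset.sum_congr rfl (fun j hj => ?_)
          have hjn : j + 1 ≤ n := Finset.mem_range.mp hj
          have hiff : ∀ u : (ZMod (2 ^ n))ˣ,
              (j + 1 ≤ val n (1 - (u : ZMod (2 ^ n)))) ↔
                ((2 : ZMod (2 ^ n)) ^ (j + 1) ∣ 1 - (u : ZMod (2 ^ n))) :=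
            fun u => (pow_dvd_iff n hjn _).symm
          calc (∑ u : (ZMod (2 ^ n))ˣ,
                if j + 1 ≤ val n (1 - (u : ZMod (2 ^ n))) then 1 else 0)
              = ∑ u : (ZMod (2 ^ n))ˣ,
                if (2 : ZMod (2 ^ n)) ^ (j + 1) ∣ 1 - (u : ZMod (2 ^ n)) then 1 else 0 := by
                refine Finset.sum_congr rfl (fun u _ => ?_)
                rw [if_congr (hiff u) rfl rfl]
            _ = (Finset.univ.filter
                  (fun u : (ZMod (2 ^ n))ˣ =>
                    (2 : ZMod (2 ^ n)) ^ (j + 1) ∣ 1 - (u : ZMod (2 ^ n)))).card := by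
                rw [Finset.sum_boole]
                simp
            _ = Nat.card {u : (ZMod (2 ^ n))ˣ //
                  (2 : ZMod (2 ^ n)) ^ (j + 1) ∣ 1 - (u : ZMod (2 ^ n))} := by
                rw [Nat.card_eq_fintype_card, Fintype.card_subtype]
            _ = 2 ^ (n - (j + 1)) := card_dvd_subtype n (Nat.le_add_left 1 j) hjn
      _ = 2 ^ n - 1 := by
          have : ∀ j ∈ Finset.range n, (2 : ℕ) ^ (n - (j + 1)) = 2 ^ (n - 1 - j) := by
            intro j hj
            congr 1
            omega
          rw [Finset.sum_congr rfl this, Finset.sum_range_reflect (fun j => 2 ^ j) n,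
            sum_two_pow]
  rw [hval, hunits, sum_two_pow]
  have h1 : (2 : ℕ) ^ (n + 1) = 2 * 2 ^ n := by ring
  have h2 : (2 : ℕ) ^ n = 2 * 2 ^ (n - 1) := by
    rw [← pow_succ']
    congr 1
    omega
  have h3 : 1 ≤ (2 : ℕ) ^ (n - 1) := Nat.one_le_two_pow
  omega
end

section
/- For any prime p and n ≥ 1, the group Hol(C_{p^n}) has a unique minimal normal subgroup, and this subgroup has order p. -/
open SemidirectProduct Multiplicative

/-- `N` is a minimal normal subgroup of `G`. -/
def IsMinimalNormal {G : Type*} [Group G] (N : Subgroup G) : Prop :=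
  N.Normal ∧ N ≠ ⊥ ∧ ∀ M : Subgroup G, M.Normal → M ≠ ⊥ → M ≤ N → M = N

lemma hol_conj_inl {m : ℕ} (t : Hol m) (b : Cyc m) :
    t * SemidirectProduct.inl b * t⁻¹ = SemidirectProduct.inl (t.right b) := by
  ext
  · simp [mul_comm]
  · simp

lemma hol_comm_inl {m : ℕ} (t : Hol m) (b : Cyc m) :
    SemidirectProduct.inl b * t * (SemidirectProduct.inl b)⁻¹ * t⁻¹
      = SemidirectProduct.inl (b * (t.right b)⁻¹) := by
  ext
  · simp [mul_assoc]
  · simp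

lemma inl_ofAdd_zsmul_mem {m : ℕ} (c : Cyc m) (M : Subgroup (Hol m))
    (h : SemidirectProduct.inl c ∈ M) (k : ℤ) :
    SemidirectProduct.inl (Multiplicative.ofAdd (k • Multiplicative.toAdd c)) ∈ M := by
  rw [ofAdd_zsmul, ofAdd_toAdd, map_zpow]
  exact M.zpow_mem h k

lemma exists_zsmul_eq (p n : ℕ) (hp : p.Prime) (y : ZMod (p ^ n)) (hy : y ≠ 0) :
    ∃ k : ℤ, k • y = ((p ^ (n - 1) : ℕ) : ZMod (p ^ n)) := by
  haveI : NeZero (p ^ n) := ⟨pow_ne_zero n hp.ne_zero⟩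
  have hv : y.val ≠ 0 := fun h => hy (by rw [← ZMod.natCast_rightInverse y, h, Nat.cast_zero])
  obtain ⟨m, hm, hme⟩ := (Nat.dvd_prime_pow hp).1 (Nat.gcd_dvd_left (p ^ n) y.val)
  have hdlt : Nat.gcd (p ^ n) y.val < p ^ n :=
    lt_of_le_of_lt (Nat.le_of_dvd (Nat.pos_of_ne_zero hv) (Nat.gcd_dvd_right _ _)) (ZMod.val_lt y)
  have hmn : m ≤ n - 1 := by
    rcases Nat.lt_or_ge m n with h | h
    · omega
    · exfalso; rw [hme] at hdlt
      exact absurd hdlt (not_lt.2 (Nat.pow_le_pow_right hp.pos h))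
  have hbez : (Nat.gcd (p ^ n) y.val : ℤ)
      = (p ^ n : ℕ) * Nat.gcdA (p ^ n) y.val + y.val * Nat.gcdB (p ^ n) y.val :=
    Nat.gcd_eq_gcd_ab _ _
  have hcast : ((Nat.gcd (p ^ n) y.val : ℕ) : ZMod (p ^ n)) = Nat.gcdB (p ^ n) y.val • y := by
    have h := congrArg (fun z : ℤ => (z : ZMod (p ^ n))) hbez
    simp only [Int.cast_add, Int.cast_mul, Int.cast_natCast, ZMod.natCast_self,
      zero_mul, zero_add, ZMod.natCast_rightInverse y] at h
    rw [h, zsmul_eq_mul, mul_comm]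
  refine ⟨(p ^ (n - 1 - m) : ℕ) * Nat.gcdB (p ^ n) y.val, ?_⟩
  have hsplit : (p ^ (n - 1) : ℕ) = p ^ (n - 1 - m) * Nat.gcd (p ^ n) y.val := by
    rw [hme, ← pow_add]; congr 1; omega
  rw [mul_smul, ← hcast, hsplit]
  push_cast
  rw [zsmul_eq_mul]
  push_cast
  ring

lemma p_torsion_mem (p n : ℕ) (hp : p.Prime) (hn : 1 ≤ n) (y : ZMod (p ^ n))
    (h : p • y = 0) : ∃ k : ℤ, k • ((p ^ (n - 1) : ℕ) : ZMod (p ^ n)) = y := by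
  haveI : NeZero (p ^ n) := ⟨pow_ne_zero n hp.ne_zero⟩
  have h1 : ((p * y.val : ℕ) : ZMod (p ^ n)) = 0 := by
    push_cast
    rw [ZMod.natCast_rightInverse y]
    rw [nsmul_eq_mul] at h
    exact_mod_cast h
  have h2 : p ^ n ∣ p * y.val := (ZMod.natCast_eq_zero_iff _ _).1 h1
  obtain ⟨c, hc⟩ := h2
  have hpn : p ^ n = p * p ^ (n - 1) := by
    rw [← pow_succ']; congr 1; omega
  have hyval : y.val = p ^ (n - 1) * c := by
    have : p * y.val = p * (p ^ (n - 1) * c) := by rw [hc, hpn]; ring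
    exact Nat.eq_of_mul_eq_mul_left hp.pos this
  refine ⟨(c : ℤ), ?_⟩
  rw [zsmul_eq_mul]
  rw [← ZMod.natCast_rightInverse y, hyval]
  push_cast
  ring

/-- The canonical generator of order `p`. -/
noncomputable def holGen (p n : ℕ) : Hol (p ^ n) :=
  SemidirectProduct.inl (Multiplicative.ofAdd ((p ^ (n - 1) : ℕ) : ZMod (p ^ n)))

lemma holGen_mem (p n : ℕ) (hp : p.Prime) (hn : 1 ≤ n) (M : Subgroup (Hol (p ^ n)))
    (hMn : M.Normal) (hMb : M ≠ ⊥) : holGen p n ∈ M := by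
  haveI : NeZero (p ^ n) := ⟨pow_ne_zero n hp.ne_zero⟩
  obtain ⟨⟨t, htM⟩, ht1⟩ := Subgroup.ne_bot_iff_exists_ne_one.1 hMb
  have ht1' : t ≠ 1 := fun h => ht1 (Subtype.ext h)
  by_cases hσ : t.right = 1
  · have hta : Multiplicative.toAdd t.left ≠ 0 := by
      intro h
      exact ht1' (SemidirectProduct.ext (by simpa using congrArg Multiplicative.ofAdd h) hσ)
    have htinl : t = SemidirectProduct.inl t.left := SemidirectProduct.ext rfl hσ
    obtain ⟨k, hk⟩ := exists_zsmul_eq p n hp _ hta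
    have := inl_ofAdd_zsmul_mem t.left M (htinl ▸ htM) k
    rw [hk] at this
    exact this
  · have hb : ∃ b : Cyc (p ^ n), t.right b ≠ b := by
      by_contra h
      push_neg at h
      exact hσ (MulEquiv.ext h)
    obtain ⟨b, hbne⟩ := hb
    have hcmem : SemidirectProduct.inl (b * (t.right b)⁻¹) ∈ M := by
      rw [← hol_comm_inl t b]
      exact M.mul_mem (hMn.conj_mem t htM (SemidirectProduct.inl b)) (M.inv_mem htM)
    have hcne : Multiplicative.toAdd (b * (t.right b)⁻¹) ≠ 0 := by
      intro h
      apply hbne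
      have : b * (t.right b)⁻¹ = 1 := by simpa using congrArg Multiplicative.ofAdd h
      rw [mul_inv_eq_one] at this
      exact this.symm
    obtain ⟨k, hk⟩ := exists_zsmul_eq p n hp _ hcne
    have := inl_ofAdd_zsmul_mem _ M hcmem k
    rw [hk] at this
    exact this

lemma holGen_zpowers_normal (p n : ℕ) (hp : p.Prime) (hn : 1 ≤ n) :
    (Subgroup.zpowers (holGen p n)).Normal := by
  haveI : NeZero (p ^ n) := ⟨pow_ne_zero n hp.ne_zero⟩
  have hpx : p • ((p ^ (n - 1) : ℕ) : ZMod (p ^ n)) = 0 := by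
    have h1 : p * p ^ (n - 1) = p ^ n := by rw [← pow_succ']; congr 1; omega
    have : p • ((p ^ (n - 1) : ℕ) : ZMod (p ^ n)) = ((p * p ^ (n - 1) : ℕ) : ZMod (p ^ n)) := by
      push_cast [nsmul_eq_mul]; ring
    rw [this, h1, ZMod.natCast_self]
  constructor
  intro h hmem t
  obtain ⟨k, hk⟩ := Subgroup.mem_zpowers_iff.1 hmem
  have hconj : t * h * t⁻¹ = (t * holGen p n * t⁻¹) ^ k := by rw [← hk, conj_zpow]
  rw [hconj]
  apply Subgroup.zpow_mem
  rw [holGen, hol_conj_inl]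
  have hpy : p • Multiplicative.toAdd
      (t.right (Multiplicative.ofAdd ((p ^ (n - 1) : ℕ) : ZMod (p ^ n)))) = 0 := by
    have : Multiplicative.ofAdd (p • Multiplicative.toAdd
        (t.right (Multiplicative.ofAdd ((p ^ (n - 1) : ℕ) : ZMod (p ^ n))))) = 1 := by
      rw [ofAdd_nsmul, ofAdd_toAdd, ← map_pow, ← ofAdd_nsmul, hpx, ofAdd_zero, map_one]
    simpa using this
  obtain ⟨k', hk'⟩ := p_torsion_mem p n hp hn _ hpy
  have := inl_ofAdd_zsmul_mem _ (Subgroup.zpowers (holGen p n))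
    (Subgroup.mem_zpowers (holGen p n)) k'
  rw [holGen] at this
  simp only [toAdd_ofAdd] at this
  rw [hk', ofAdd_toAdd] at this
  exact this

/-- For any prime `p` and `n ≥ 1`, `Hol(C_{p^n})` has a unique minimal normal subgroup,
and this subgroup has order `p`. -/
theorem stmt16 (p n : ℕ) (hp : p.Prime) (hn : 1 ≤ n) :
    ∃ N : Subgroup (Hol (p ^ n)),
      (IsMinimalNormal N ∧ Nat.card N = p) ∧
      ∀ M : Subgroup (Hol (p ^ n)), IsMinimalNormal M → M = N := by
  haveI : NeZero (p ^ n) := ⟨pow_ne_zero n hp.ne_zero⟩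
  have hx0 : ((p ^ (n - 1) : ℕ) : ZMod (p ^ n)) ≠ 0 := by
    rw [Ne, ZMod.natCast_eq_zero_iff]
    intro hdvd
    have := Nat.le_of_dvd (pow_pos hp.pos _) hdvd
    exact absurd this (not_le.2 (Nat.pow_lt_pow_right hp.one_lt (by omega)))
  have hg1 : holGen p n ≠ 1 := by
    rw [holGen]
    intro h
    rw [← (SemidirectProduct.inl :
      Cyc (p ^ n) →* Hol (p ^ n)).map_one, SemidirectProduct.inl_inj] at h
    exact hx0 (by simpa using h)
  set N : Subgroup (Hol (p ^ n)) := Subgroup.zpowers (holGen p n) with hNdef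
  have hNnorm : N.Normal := holGen_zpowers_normal p n hp hn
  have hNbot : N ≠ ⊥ := by
    intro h
    exact hg1 ((Subgroup.eq_bot_iff_forall N).1 h _ (Subgroup.mem_zpowers _))
  refine ⟨N, ⟨⟨hNnorm, hNbot, ?_⟩, ?_⟩, ?_⟩
  · intro M hMn hMb hle
    exact le_antisymm hle (Subgroup.zpowers_le.2 (holGen_mem p n hp hn M hMn hMb))
  · rw [hNdef, Nat.card_zpowers, holGen,
      orderOf_injective SemidirectProduct.inl SemidirectProduct.inl_injective,
      orderOf_ofAdd_eq_addOrderOf, ZMod.addOrderOf_coe _ (pow_ne_zero n hp.ne_zero),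
      Nat.gcd_eq_right (pow_dvd_pow p (by omega : n - 1 ≤ n)),
      Nat.pow_div (by omega) hp.pos, show n - (n - 1) = 1 by omega, pow_one]
  · intro M hM
    obtain ⟨hMn, hMb, hMmin⟩ := hM
    exact (hMmin N hNnorm hNbot
      (Subgroup.zpowers_le.2 (holGen_mem p n hp hn M hMn hMb))).symm
end

section
/- For any prime p and n ≥ 1, the character χ of the unique faithful irreducible complex representation of Hol(C_{p^n}) takes only the values φ(p^n), −p^{n-1}, and 0. In particular, its value on the element a^{p^{n-1}} (of order p in the normal cyclic subgroup ⟨a⟩ ≅ C_{p^n}) equals −p^{n-1}, and χ vanishes outside ⟨a⟩. -/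
open CategoryTheory

open SemidirectProduct Multiplicative Module LinearMap

set_option linter.unusedSectionVars false

section Aux

lemma aux_invariant_bot_or_top {G : Type} [Monoid G] (V : FDRep ℂ G) (hs : Simple V)
    (U : Submodule ℂ V) (hU : ∀ g : G, ∀ x ∈ U, V.ρ g x ∈ U) : U = ⊥ ∨ U = ⊤ := by
  by_cases hbot : U = ⊥
  · exact Or.inl hbot
  right
  let ρU : Representation ℂ G U :=
    { toFun := fun g => (V.ρ g).restrict (hU g)
      map_one' := by ext x; simp [LinearMap.restrict_apply]
      map_mul' := fun g h => by ext x; simp [LinearMap.restrict_apply] }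
  let W : FDRep ℂ G := FDRep.of ρU
  let ι : W ⟶ V := ⟨ConcreteCategory.ofHom (U.subtype : _ →ₗ[ℂ] _), fun g => rfl⟩
  haveI : Mono ι := by
    apply (Action.forget _ _).mono_of_mono_map
    exact ConcreteCategory.mono_of_injective _ (Submodule.injective_subtype U)
  obtain ⟨x, hxU, hx0⟩ := Submodule.ne_bot_iff U |>.mp hbot
  have hne : ι ≠ 0 := by
    intro h
    apply hx0
    have : ι.hom ⟨x, hxU⟩ = x := rfl
    rw [h] at this
    exact this.symm.trans rfl
  haveI : IsIso ι := (hs.mono_isIso_iff_nonzero ι).mpr hne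
  rw [Submodule.eq_top_iff']
  intro v
  have h1 : ι.hom ((inv ι).hom v) = v := by
    have h2 : ((inv ι) ≫ ι).hom = (𝟙 V : V ⟶ V).hom := congrArg _ (IsIso.inv_hom_id ι)
    rw [Action.comp_hom, Action.id_hom] at h2
    have h3 := ConcreteCategory.congr_hom h2 v
    simpa using h3
  exact h1 ▸ ((inv ι).hom v).2

open Polynomial in
lemma aux_sum_nthRoots (m k : ℕ) (hm : m ≠ 0) :
    ∑ μ ∈ nthRootsFinset m (1 : ℂ), μ ^ k = if m ∣ k then (m : ℂ) else 0 := by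
  obtain ⟨ζ, hζ⟩ : ∃ ζ : ℂ, IsPrimitiveRoot ζ m := ⟨_, Complex.isPrimitiveRoot_exp m hm⟩
  have hpos : 0 < m := Nat.pos_of_ne_zero hm
  have himg : nthRootsFinset m (1 : ℂ) = (Finset.range m).image (ζ ^ ·) := by
    ext μ
    rw [Polynomial.mem_nthRootsFinset hpos, Finset.mem_image]
    constructor
    · intro h
      haveI : NeZero m := ⟨hm⟩
      obtain ⟨i, hi, hie⟩ := hζ.eq_pow_of_pow_eq_one h
      exact ⟨i, Finset.mem_range.mpr hi, hie⟩
    · rintro ⟨i, _, rfl⟩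
      rw [← pow_mul, mul_comm, pow_mul, hζ.pow_eq_one, one_pow]
  rw [himg, Finset.sum_image (fun i hi j hj h =>
    hζ.pow_inj (Finset.mem_range.mp hi) (Finset.mem_range.mp hj) h)]
  have hsum : ∑ i ∈ Finset.range m, (ζ ^ i) ^ k = ∑ i ∈ Finset.range m, (ζ ^ k) ^ i := by
    refine Finset.sum_congr rfl fun i _ => ?_
    rw [← pow_mul, ← pow_mul, mul_comm]
  rw [hsum]
  by_cases hdvd : m ∣ k
  · rw [if_pos hdvd, (hζ.pow_eq_one_iff_dvd k).mpr hdvd]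
    simp
  · rw [if_neg hdvd]
    have hne1 : ζ ^ k ≠ 1 := fun h => hdvd ((hζ.pow_eq_one_iff_dvd k).mp h)
    have hmul := geom_sum_mul (ζ ^ k) m
    have : (ζ ^ k) ^ m - 1 = 0 := by
      rw [← pow_mul, mul_comm, pow_mul, hζ.pow_eq_one, one_pow, sub_self]
    rw [this] at hmul
    rcases mul_eq_zero.mp hmul with h | h
    · exact h
    · exact absurd (sub_eq_zero.mp h) hne1

variable (q : ℕ) [NeZero q]

lemma aux_pow_ofAdd (t : ℕ) : (ofAdd (1 : ZMod q)) ^ t = ofAdd ((t : ZMod q)) := by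
  rw [← ofAdd_nsmul]; simp

lemma aux_gen (x : Cyc q) : x = (ofAdd (1 : ZMod q)) ^ (toAdd x).val := by
  rw [aux_pow_ofAdd, ZMod.natCast_val, ZMod.cast_id]
  simp

omit [NeZero q] in
lemma aux_conj (g : Hol q) (x : Cyc q) :
    (inl x : Hol q) * g = g * inl (g.right⁻¹ x) := by
  ext <;> simp [mul_comm]

lemma aux_addOrderOf_one : addOrderOf (1 : ZMod q) = q := by
  have : ((1 : ℕ) : ZMod q) = (1 : ZMod q) := by norm_num
  rw [← this, ZMod.addOrderOf_coe 1 (NeZero.ne q), Nat.gcd_one_right, Nat.div_one]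

lemma aux_coprime (τ : MulAut (Cyc q)) : ((toAdd (τ (ofAdd 1))).val).Coprime q := by
  have h1 : addOrderOf (toAdd (τ (ofAdd 1))) = q := by
    rw [← orderOf_ofAdd_eq_addOrderOf]
    simp only [ofAdd_toAdd]
    rw [τ.orderOf_eq (ofAdd 1), orderOf_ofAdd_eq_addOrderOf]
    exact aux_addOrderOf_one q
  set x : ZMod q := toAdd (τ (ofAdd 1)) with hx
  have h2 : ((x.val : ℕ) : ZMod q) = x := by rw [ZMod.natCast_val, ZMod.cast_id]
  rw [← h2, ZMod.addOrderOf_coe _ (NeZero.ne q)] at h1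
  have h3 : q.gcd x.val = 1 := by
    rcases (Nat.div_eq_self.mp h1) with h | h
    · exact absurd h (NeZero.ne q)
    · exact h
  exact Nat.coprime_comm.mp h3

lemma aux_mulaut_inj : Function.Injective
    (fun τ : MulAut (Cyc q) => τ (ofAdd (1 : ZMod q))) := by
  intro τ σ h
  apply MulEquiv.ext; intro x
  rw [aux_gen q x, map_pow, map_pow]
  simp only at h
  rw [h]

omit [NeZero q] in
lemma aux_exists_aut (u : (ZMod q)ˣ) :
    ∃ τ : MulAut (Cyc q), τ (ofAdd (1 : ZMod q)) = ofAdd ((u : ZMod q)) := by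
  refine ⟨AddEquiv.toMultiplicative (AddAut.mulLeft u), ?_⟩
  show ofAdd (AddAut.mulLeft u 1) = ofAdd ((u : ZMod q))
  exact congrArg ofAdd (by show (u • (1 : ZMod q)) = _; simp [Units.smul_def])

variable (V : FDRep ℂ (Hol q))

local notation "a" => (ofAdd (1 : ZMod q) : Cyc q)
local notation "M" => (V.ρ (inl (a)) : Module.End ℂ V)

lemma aux_rho_inl (x : Cyc q) : V.ρ (inl x) = (M) ^ (toAdd x).val := by
  conv_lhs => rw [aux_gen q x]
  rw [map_pow, map_pow]

lemma aux_Mq : (M) ^ q = 1 := by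
  rw [← map_pow, ← map_pow, aux_pow_ofAdd, ZMod.natCast_self, ofAdd_zero, map_one, map_one]

lemma aux_pow_eig {μ : ℂ} {v : V} (hv : v ∈ Module.End.eigenspace (M) μ) (k : ℕ) :
    ((M) ^ k) v = μ ^ k • v := by
  induction k with
  | zero => simp
  | succ k ih =>
    rw [pow_succ, pow_succ, Module.End.mul_apply, Module.End.mem_eigenspace_iff.mp hv,
      map_smul, ih, smul_smul, mul_comm]

lemma aux_internal : DirectSum.IsInternal (Module.End.eigenspace (M)) := by
  apply DirectSum.isInternal_submodule_of_iSupIndep_of_iSup_eq_top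
  · exact Module.End.eigenspaces_iSupIndep _
  · have hss : Module.End.IsSemisimple (M) := by
      apply Module.End.isSemisimple_of_squarefree_aeval_eq_zero
        (p := Polynomial.X ^ q - 1)
      · refine Polynomial.Separable.squarefree ?_
        rw [Polynomial.X_pow_sub_one_separable_iff]
        exact_mod_cast (Nat.cast_ne_zero (R := ℂ)).mpr (NeZero.ne q)
      · simp [aux_Mq q V]
    have h1 := Module.End.iSup_maxGenEigenspace_eq_top (M)
    have h2 := hss.isFinitelySemisimple.maxGenEigenspace_eq_eigenspace
    simp_rw [h2] at h1
    exact h1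

lemma aux_maps (g : Hol q) {μ : ℂ} {v : V} (hv : v ∈ Module.End.eigenspace (M) μ) :
    V.ρ g v ∈ Module.End.eigenspace (M) (μ ^ (toAdd (g.right⁻¹ a)).val) := by
  rw [Module.End.mem_eigenspace_iff]
  have h1 : (M) (V.ρ g v) = V.ρ ((inl (a) : Hol q) * g) v := by
    rw [map_mul]; rfl
  rw [h1, aux_conj q g, map_mul, Module.End.mul_apply, aux_rho_inl q V,
    aux_pow_eig q V hv, map_smul]


local notation "EE" => Module.End.eigenspace (V.ρ (inl (a)) : Module.End ℂ V)
local notation "SS" => primitiveRoots q ℂ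

lemma aux_char (g : Hol q) : V.character g = LinearMap.trace ℂ V (V.ρ g) := rfl

set_option maxHeartbeats 2000000 in
theorem aux_main (p n : ℕ) (hp : p.Prime) (hn : 1 ≤ n) (hq : q = p ^ n)
    (hs : Simple V) (hf : Function.Injective V.ρ) :
    (∀ g : Hol q,
        V.character g ∈ ({(Nat.totient q : ℂ), -((p : ℂ) ^ (n - 1)), 0} : Set ℂ)) ∧
    V.character (inl ((ofAdd (1 : ZMod q)) ^ (p ^ (n - 1)))) = -((p : ℂ) ^ (n - 1)) ∧
    (∀ g : Hol q, g.right ≠ 1 → V.character g = 0) := by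
  classical
  have hq1 : 1 < q := by rw [hq]; exact Nat.one_lt_pow (by omega) hp.one_lt
  have hqpos : 0 < q := by omega
  have hplt : p ^ (n - 1) < q := by
    rw [hq]; exact Nat.pow_lt_pow_right hp.one_lt (by omega)
  have hppos : 0 < p ^ (n - 1) := pow_pos hp.pos _
  have hpmul : p ^ (n - 1) * p = q := by
    rw [hq, ← pow_succ, Nat.sub_add_cancel hn]
  have hndvd : ¬ (q ∣ p ^ (n - 1)) :=
    fun h => absurd (Nat.le_of_dvd hppos h) (not_le.mpr hplt)
  have hcastne : ((p ^ (n - 1) : ℕ) : ZMod q) ≠ 0 := by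
    rw [Ne, ZMod.natCast_eq_zero_iff]
    exact hndvd
  -- faithfulness: M ^ (p^(n-1)) ≠ 1
  have hMppow_ne : (V.ρ (inl (a)) : Module.End ℂ V) ^ (p ^ (n - 1)) ≠ 1 := by
    intro h
    have h2 : V.ρ (inl ((a) ^ (p ^ (n - 1)))) = V.ρ 1 := by
      rw [map_pow, map_pow, h, map_one]
    have h3 := hf h2
    rw [aux_pow_ofAdd] at h3
    have h4 := congrArg SemidirectProduct.left h3
    simp only [left_inl] at h4
    exact hcastne (by simpa using congrArg toAdd h4)
  have hfix : ∀ (N : Module.End ℂ V) (k : ℕ) (y : V), N y = y → (N ^ k) y = y := by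
    intro N k y hy
    induction k with
    | zero => simp
    | succ k ih => rw [pow_succ, Module.End.mul_apply, hy, ih]
  -- the kernel of M^(p^(n-1)) - 1 is trivial
  have hker : LinearMap.ker ((V.ρ (inl (a)) : Module.End ℂ V) ^ (p ^ (n - 1)) - 1) = ⊥ := by
    have hinv : ∀ g : Hol q, ∀ x ∈ LinearMap.ker
        ((V.ρ (inl (a)) : Module.End ℂ V) ^ (p ^ (n - 1)) - 1),
        V.ρ g x ∈ LinearMap.ker ((V.ρ (inl (a)) : Module.End ℂ V) ^ (p ^ (n - 1)) - 1) := by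
      intro g x hx
      rw [LinearMap.mem_ker, LinearMap.sub_apply, Module.End.one_apply, sub_eq_zero] at hx ⊢
      have e1 : ((V.ρ (inl (a)) : Module.End ℂ V) ^ (p ^ (n - 1))) (V.ρ g x) =
          V.ρ ((inl ((a) ^ (p ^ (n - 1))) : Hol q) * g) x := by
        rw [map_mul, map_pow, map_pow, Module.End.mul_apply]
      rw [e1, aux_conj q g, map_mul, Module.End.mul_apply]
      congr 1
      have e3 : g.right⁻¹ ((a) ^ (p ^ (n - 1))) =
          (a) ^ ((p ^ (n - 1)) * (toAdd (g.right⁻¹ (a))).val) := by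
        conv_lhs => rw [map_pow]
        conv_lhs => rw [aux_gen q (g.right⁻¹ (a))]
        rw [← pow_mul, mul_comm]
      rw [e3, map_pow, map_pow, pow_mul]
      exact hfix _ _ _ hx
    rcases aux_invariant_bot_or_top V hs _ hinv with h | h
    · exact h
    · exfalso
      apply hMppow_ne
      apply LinearMap.ext
      intro x
      have hx : x ∈ LinearMap.ker ((V.ρ (inl (a)) : Module.End ℂ V) ^ (p ^ (n - 1)) - 1) := by
        rw [h]; trivial
      rw [LinearMap.mem_ker, LinearMap.sub_apply, Module.End.one_apply, sub_eq_zero] at hx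
      simpa using hx
  -- roots of unity facts
  have hprimroot : ∀ μ : ℂ, μ ^ q = 1 → μ ^ (p ^ (n - 1)) ≠ 1 → IsPrimitiveRoot μ q := by
    intro μ h1 h2
    have hdvd : orderOf μ ∣ p ^ n := by rw [← hq]; exact orderOf_dvd_of_pow_eq_one h1
    obtain ⟨j, hj, hordj⟩ := (Nat.dvd_prime_pow hp).mp hdvd
    have hjn : j = n := by
      by_contra hne
      have hjle : j ≤ n - 1 := by omega
      exact h2 (orderOf_dvd_iff_pow_eq_one.mp (hordj ▸ pow_dvd_pow p hjle))
    have horder : orderOf μ = q := by rw [hordj, hjn, hq]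
    exact horder ▸ IsPrimitiveRoot.orderOf μ
  -- all eigenvalues are primitive roots
  have hprim : ∀ μ : ℂ, (EE) μ ≠ ⊥ → μ ∈ SS := by
    intro μ hμ
    obtain ⟨v, hvmem, hv0⟩ := Submodule.ne_bot_iff _ |>.mp hμ
    have hqone : μ ^ q = 1 := by
      have h1 := aux_pow_eig q V hvmem q
      rw [aux_Mq] at h1
      have h2 : v = μ ^ q • v := by simpa using h1
      by_contra hne
      have h3 : (μ ^ q - 1) • v = 0 := by rw [sub_smul, one_smul, ← h2, sub_self]
      rcases smul_eq_zero.mp h3 with h | h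
      · exact hne (sub_eq_zero.mp h)
      · exact hv0 h
    have hq2 : μ ^ (p ^ (n - 1)) ≠ 1 := by
      intro h
      apply hv0
      have h1 := aux_pow_eig q V hvmem (p ^ (n - 1))
      rw [h, one_smul] at h1
      have h2 : v ∈ LinearMap.ker ((V.ρ (inl (a)) : Module.End ℂ V) ^ (p ^ (n - 1)) - 1) := by
        rw [LinearMap.mem_ker, LinearMap.sub_apply, Module.End.one_apply, sub_eq_zero]
        exact h1
      rw [hker] at h2
      simpa using h2
    rw [mem_primitiveRoots hqpos]
    exact hprimroot μ hqone hq2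
  -- nontriviality, existence of an eigenvalue
  haveI hNontriv : Nontrivial V := by
    by_contra hnt
    rw [not_nontrivial_iff_subsingleton] at hnt
    exact hMppow_ne (Subsingleton.elim _ _)
  obtain ⟨ζ0, hζ0ne⟩ : ∃ μ : ℂ, (EE) μ ≠ ⊥ := by
    obtain ⟨c, hc⟩ := Module.End.exists_eigenvalue (V.ρ (inl (a)) : Module.End ℂ V)
    exact ⟨c, Module.End.hasEigenvalue_iff.mp hc⟩
  have hζ0prim : IsPrimitiveRoot ζ0 q := (mem_primitiveRoots hqpos).mp (hprim ζ0 hζ0ne)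
  obtain ⟨v, hvmem, hv0⟩ := Submodule.ne_bot_iff _ |>.mp hζ0ne
  -- transporting the eigenvector around
  have htrans : ∀ τ : MulAut (Cyc q),
      V.ρ (inr τ) v ∈ (EE) (ζ0 ^ (toAdd (τ⁻¹ (a))).val) ∧ V.ρ (inr τ) v ≠ 0 := by
    intro τ
    constructor
    · have h1 := aux_maps q V (inr τ) hvmem
      exact h1
    · intro h0
      apply hv0
      have h1 : V.ρ (inr τ⁻¹) (V.ρ (inr τ) v) = v := by
        rw [← Module.End.mul_apply, ← map_mul, ← map_mul, inv_mul_cancel, map_one, map_one,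
          Module.End.one_apply]
      rw [h0, map_zero] at h1
      exact h1.symm
  -- every primitive root is an eigenvalue
  have hEnonbot : ∀ μ ∈ SS, (EE) μ ≠ ⊥ := by
    intro μ hμ
    have hμprim := (mem_primitiveRoots hqpos).mp hμ
    obtain ⟨i, hi, hie⟩ := hζ0prim.eq_pow_of_pow_eq_one hμprim.pow_eq_one
    have hcopi : i.Coprime q := (hζ0prim.pow_iff_coprime hqpos i).mp (by rw [hie]; exact hμprim)
    obtain ⟨τ, hτ⟩ := aux_exists_aut q (ZMod.unitOfCoprime i hcopi)
    have h1 := (htrans τ⁻¹).1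
    rw [inv_inv, hτ] at h1
    have h2 : (toAdd (ofAdd ((ZMod.unitOfCoprime i hcopi : ZMod q)))).val = i := by
      rw [toAdd_ofAdd, ZMod.coe_unitOfCoprime, ZMod.val_natCast, Nat.mod_eq_of_lt hi]
    rw [h2, hie] at h1
    exact Submodule.ne_bot_iff _ |>.mpr ⟨_, h1, (htrans τ⁻¹).2⟩
  -- span of the orbit of v is everything; dimension bound
  have hfinV : finrank ℂ V ≤ q.totient := by
    set f : MulAut (Cyc q) → V := fun τ => V.ρ (inr τ) v with hfdef
    set U2 := Submodule.span ℂ (Set.range f) with hU2def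
    have hU2inv : ∀ g : Hol q, ∀ x ∈ U2, V.ρ g x ∈ U2 := by
      intro g x hx
      have hmap : Submodule.map (V.ρ g) U2 ≤ U2 := by
        rw [hU2def, Submodule.map_span, Submodule.span_le]
        rintro y ⟨z, ⟨τ, rfl⟩, rfl⟩
        have e1 : V.ρ g (f τ) = V.ρ (g * inr τ) v := by
          rw [map_mul, Module.End.mul_apply]
        have e2 : V.ρ (g * inr τ) v = V.ρ (inl (g * inr τ).left) (f (g * inr τ).right) := by
          conv_lhs => rw [← inl_left_mul_inr_right (g * inr τ)]
          rw [map_mul, Module.End.mul_apply]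
        have e3 : V.ρ (inl (g * inr τ).left) (f (g * inr τ).right) =
            ((ζ0 ^ (toAdd (((g * inr τ).right)⁻¹ (a))).val) ^ (toAdd (g * inr τ).left).val) •
              f (g * inr τ).right := by
          rw [aux_rho_inl q V]
          exact aux_pow_eig q V (htrans (g * inr τ).right).1 _
        simp only [SetLike.mem_coe]
        rw [e1, e2, e3]
        exact Submodule.smul_mem _ _ (Submodule.subset_span ⟨(g * inr τ).right, rfl⟩)
      exact hmap ⟨x, hx, rfl⟩
    have hU2top : U2 = ⊤ := by
      rcases aux_invariant_bot_or_top V hs U2 hU2inv with h | h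
      · exfalso
        have hv' : v ∈ U2 := by
          apply Submodule.subset_span
          exact ⟨1, by simp [hfdef]⟩
        rw [h] at hv'
        exact hv0 (by simpa using hv')
      · exact h
    set emb : MulAut (Cyc q) → (ZMod q)ˣ :=
      fun τ => ZMod.unitOfCoprime _ (aux_coprime q τ) with hembdef
    have hembinj : Function.Injective emb := by
      intro τ σ h
      apply aux_mulaut_inj q
      have h1 := congrArg (fun u : (ZMod q)ˣ => (u : ZMod q)) h
      simp only [hembdef, ZMod.coe_unitOfCoprime] at h1
      rw [ZMod.natCast_val, ZMod.cast_id, ZMod.natCast_val, ZMod.cast_id] at h1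
      simpa using congrArg ofAdd h1
    haveI : Finite (MulAut (Cyc q)) := Finite.of_injective emb hembinj
    haveI : Fintype (MulAut (Cyc q)) := Fintype.ofFinite _
    have hcard : Fintype.card (MulAut (Cyc q)) ≤ Fintype.card (ZMod q)ˣ :=
      Fintype.card_le_of_injective emb hembinj
    have h1 : finrank ℂ V = finrank ℂ U2 := by rw [hU2top]; exact (finrank_top ℂ V).symm
    have h2 : finrank ℂ U2 ≤ (Set.range f).toFinset.card := finrank_span_le_card (Set.range f)
    have h3 : (Set.range f).toFinset.card ≤ Fintype.card (MulAut (Cyc q)) := by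
      rw [Set.toFinset_card]
      exact Fintype.card_range_le f
    rw [ZMod.card_units_eq_totient] at hcard
    omega
  -- trace formula
  have hNfin : {μ : ℂ | (EE) μ ≠ ⊥}.Finite :=
    Set.Finite.subset (SS).finite_toSet hprim
  have hNtoF : hNfin.toFinset = SS := by
    ext μ
    rw [Set.Finite.mem_toFinset, Set.mem_setOf_eq]
    exact ⟨fun h => hprim μ h, fun h => hEnonbot μ h⟩
  have hMk : ∀ (k : ℕ) (μ : ℂ), Set.MapsTo (⇑((V.ρ (inl (a)) : Module.End ℂ V) ^ k))
      ((EE) μ) ((EE) μ) := by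
    intro k μ x hx
    simp only [SetLike.mem_coe]
    have h1 : ((V.ρ (inl (a)) : Module.End ℂ V) ^ k) x = μ ^ k • x := aux_pow_eig q V hx k
    rw [h1]
    exact Submodule.smul_mem _ _ hx
  have htr : ∀ k : ℕ, LinearMap.trace ℂ V ((V.ρ (inl (a)) : Module.End ℂ V) ^ k) =
      ∑ μ ∈ SS, μ ^ k * (finrank ℂ ((EE) μ) : ℂ) := by
    intro k
    rw [LinearMap.trace_eq_sum_trace_restrict' (aux_internal q V) hNfin (hMk k), hNtoF]
    refine Finset.sum_congr rfl fun μ hμ => ?_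
    have hres : (((V.ρ (inl (a)) : Module.End ℂ V) ^ k).restrict (hMk k μ)) =
        (μ ^ k) • (1 : Module.End ℂ ((EE) μ)) := by
      refine LinearMap.ext fun x => Subtype.ext ?_
      change ((V.ρ (inl (a)) : Module.End ℂ V) ^ k) (x : V) = _
      have := aux_pow_eig q V x.2 k
      rw [this]
      rfl
    rw [hres, map_smul, LinearMap.trace_one, smul_eq_mul]
  -- all eigenspaces are one-dimensional
  have hd1 : ∀ μ ∈ SS, finrank ℂ ((EE) μ) = 1 := by
    have hsum : (finrank ℂ V : ℂ) = ∑ μ ∈ SS, (finrank ℂ ((EE) μ) : ℂ) := by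
      have h0 := htr 0
      rw [pow_zero, LinearMap.trace_one] at h0
      simpa using h0
    have hsumN : finrank ℂ V = ∑ μ ∈ SS, finrank ℂ ((EE) μ) := by
      exact_mod_cast hsum
    have hge : ∀ μ ∈ SS, 1 ≤ finrank ℂ ((EE) μ) := by
      intro μ hμ
      have := Submodule.nontrivial_iff_ne_bot.mpr (hEnonbot μ hμ)
      exact Module.finrank_pos
    have hcardS : (SS).card = q.totient := Complex.card_primitiveRoots _
    have heq : ∑ _μ ∈ SS, (1 : ℕ) = ∑ μ ∈ SS, finrank ℂ ((EE) μ) := by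
      have hle : ∑ _μ ∈ SS, (1 : ℕ) ≤ ∑ μ ∈ SS, finrank ℂ ((EE) μ) := Finset.sum_le_sum hge
      have h1 : ∑ _μ ∈ SS, (1 : ℕ) = (SS).card := by simp
      omega
    intro μ hμ
    exact ((Finset.sum_eq_sum_iff_of_le hge).mp heq μ hμ).symm
  -- Ramanujan-type sum
  have hRam : ∀ k : ℕ, ∑ μ ∈ SS, μ ^ k =
      (if q ∣ k then ((q : ℕ) : ℂ) else 0) -
        (if p ^ (n - 1) ∣ k then ((p ^ (n - 1) : ℕ) : ℂ) else 0) := by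
    intro k
    have hSdiff : SS = Polynomial.nthRootsFinset q (1 : ℂ) \ Polynomial.nthRootsFinset (p ^ (n - 1)) (1 : ℂ) := by
      ext μ
      rw [mem_primitiveRoots hqpos, Finset.mem_sdiff, Polynomial.mem_nthRootsFinset hqpos,
        Polynomial.mem_nthRootsFinset hppos]
      constructor
      · intro h
        exact ⟨h.pow_eq_one, fun h2 => hndvd ((h.pow_eq_one_iff_dvd _).mp h2)⟩
      · rintro ⟨h1, h2⟩
        exact hprimroot μ h1 h2
    have hsub : Polynomial.nthRootsFinset (p ^ (n - 1)) (1 : ℂ) ⊆ Polynomial.nthRootsFinset q (1 : ℂ) := by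
      intro μ hμ
      rw [Polynomial.mem_nthRootsFinset hppos] at hμ
      rw [Polynomial.mem_nthRootsFinset hqpos, ← hpmul, pow_mul, hμ, one_pow]
    rw [hSdiff, Finset.sum_sdiff_eq_sub hsub, aux_sum_nthRoots q k hqpos.ne',
      aux_sum_nthRoots _ k hppos.ne']
  -- character on the cyclic subgroup
  have hcharinl : ∀ x : Cyc q, V.character (inl x) = ∑ μ ∈ SS, μ ^ (toAdd x).val := by
    intro x
    rw [aux_char, aux_rho_inl q V x, htr]
    refine Finset.sum_congr rfl fun μ hμ => ?_
    rw [hd1 μ hμ, Nat.cast_one, mul_one]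
  -- vanishing off the cyclic subgroup
  have hvanish : ∀ g : Hol q, g.right ≠ 1 → V.character g = 0 := by
    intro g hg
    rw [aux_char]
    apply LinearMap.trace_eq_zero_of_mapsTo_ne (aux_internal q V)
      (fun μ => if μ ∈ SS then μ ^ (toAdd (g.right⁻¹ (a))).val else μ + 1)
    · intro μ
      by_cases hμ : μ ∈ SS
      · rw [if_pos hμ]
        intro heq
        have hμp := (mem_primitiveRoots hqpos).mp hμ
        have h1 : (toAdd (g.right⁻¹ (a))).val = 1 :=
          hμp.pow_inj (ZMod.val_lt _) hq1 (by rw [heq, pow_one])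
        have h2 : g.right⁻¹ (a) = (1 : MulAut (Cyc q)) (a) := by
          show g.right⁻¹ (a) = (a)
          have h3 : toAdd (g.right⁻¹ (a)) = (1 : ZMod q) := by
            have h4 := congrArg (Nat.cast : ℕ → ZMod q) h1
            rwa [ZMod.natCast_val, ZMod.cast_id, Nat.cast_one] at h4
          calc g.right⁻¹ (a) = ofAdd (toAdd (g.right⁻¹ (a))) := by rw [ofAdd_toAdd]
          _ = (a) := by rw [h3]
        have h5 := aux_mulaut_inj q h2
        exact hg (by rwa [inv_eq_one] at h5)
      · rw [if_neg hμ]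
        intro heq
        have : μ + 1 = μ + 0 := by rw [add_zero]; exact heq
        exact one_ne_zero (add_left_cancel this)
    · intro μ
      by_cases hμ : μ ∈ SS
      · rw [if_pos hμ]
        intro x hx
        exact aux_maps q V g hx
      · rw [if_neg hμ]
        have hbot : (EE) μ = ⊥ := by
          by_contra hb
          exact hμ (hprim μ hb)
        intro x hx
        simp only [SetLike.mem_coe] at hx ⊢
        rw [hbot, Submodule.mem_bot] at hx
        rw [hx, map_zero]
        exact Submodule.zero_mem _
  refine ⟨?_, ?_, hvanish⟩
  · intro g
    by_cases hgr : g.right = 1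
    · have hg : g = inl g.left := by
        conv_lhs => rw [← inl_left_mul_inr_right g]
        rw [hgr, map_one, mul_one]
      rw [hg, hcharinl g.left, hRam]
      by_cases h1 : q ∣ (toAdd g.left).val
      · have h2 : p ^ (n - 1) ∣ (toAdd g.left).val :=
          dvd_trans (by rw [← hpmul]; exact Dvd.intro p rfl) h1
        rw [if_pos h1, if_pos h2]
        left
        have htot : q.totient = q - p ^ (n - 1) := by
          rw [hq, Nat.totient_prime_pow hp (by omega), ← hq]
          have := hpmul
          have h3 : p ^ (n - 1) * (p - 1) = p ^ (n - 1) * p - p ^ (n - 1) := by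
            rw [Nat.mul_sub, mul_one]
          rw [h3, hpmul]
        rw [htot, Nat.cast_sub hplt.le]
      · by_cases h2 : p ^ (n - 1) ∣ (toAdd g.left).val
        · rw [if_neg h1, if_pos h2]
          right; left
          rw [zero_sub]
          push_cast
          ring
        · rw [if_neg h1, if_neg h2]
          right; right
          simp
    · right; right
      exact hvanish g hgr
  · rw [hcharinl]
    have hk : (toAdd ((a) ^ (p ^ (n - 1)))).val = p ^ (n - 1) := by
      rw [aux_pow_ofAdd, toAdd_ofAdd, ZMod.val_natCast, Nat.mod_eq_of_lt hplt]
    rw [hk, hRam, if_neg hndvd, if_pos dvd_rfl, zero_sub]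
    push_cast
    ring

end Aux

/-- For any prime `p` and `n ≥ 1`, the character `χ` of the unique faithful irreducible
complex representation of `Hol(C_{p^n})` takes only the values `φ(p^n)`, `-p^{n-1}` and
`0`; its value on `a^{p^{n-1}}` (where `⟨a⟩ ≅ C_{p^n}` is the normal cyclic subgroup)
is `-p^{n-1}`, and `χ` vanishes outside `⟨a⟩`. -/
theorem stmt18 (p n : ℕ) (hp : p.Prime) (hn : 1 ≤ n)
    (V : FDRep ℂ (Hol (p ^ n))) (hs : Simple V) (hf : Function.Injective V.ρ) :
    (∀ g : Hol (p ^ n),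
        V.character g ∈ ({(Nat.totient (p ^ n) : ℂ), -((p : ℂ) ^ (n - 1)), 0} : Set ℂ)) ∧
    V.character (SemidirectProduct.inl
        (Multiplicative.ofAdd (1 : ZMod (p ^ n)) ^ (p ^ (n - 1)))) =
      -((p : ℂ) ^ (n - 1)) ∧
    (∀ g : Hol (p ^ n), g.right ≠ 1 → V.character g = 0) := by
  haveI : NeZero (p ^ n) := ⟨(pow_pos hp.pos n).ne'⟩
  exact aux_main (p ^ n) V p n hp hn rfl hs hf
end

section
/- For any prime p and n ≥ 1, the minimal degree of a faithful permutation representation of G = Hol(C_{p^n}) equals p^n; moreover it equals both the minimal degree c(G) of a faithful complex quasi-permutation representation and the minimal degree q(G) of a faithful rational quasi-permutation representation: c(G) = q(G) = p(G) = p^n. -/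
/-- `p(G)`: the minimal degree of a faithful permutation representation of `G`. -/
noncomputable def permDeg (G : Type*) [Group G] : ℕ :=
  sInf {m : ℕ | ∃ f : G →* Equiv.Perm (Fin m), Function.Injective f}

/-- `c(G)`: the minimal degree of a faithful representation of `G` by complex
quasi-permutation matrices (invertible complex matrices with non-negative integer
trace). -/
noncomputable def cDeg (G : Type*) [Group G] : ℕ :=
  sInf {m : ℕ | ∃ f : G →* GL (Fin m) ℂ, Function.Injective f ∧
    ∀ g : G, ∃ k : ℕ, Matrix.trace ((f g : Matrix (Fin m) (Fin m) ℂ)) = (k : ℂ)}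

/-- `q(G)`: the minimal degree of a faithful representation of `G` by rational
quasi-permutation matrices (invertible rational matrices with non-negative integer
trace). -/
noncomputable def qDeg (G : Type*) [Group G] : ℕ :=
  sInf {m : ℕ | ∃ f : G →* GL (Fin m) ℚ, Function.Injective f ∧
    ∀ g : G, ∃ k : ℕ, Matrix.trace ((f g : Matrix (Fin m) (Fin m) ℚ)) = (k : ℚ)}

set_option linter.unusedSectionVars false
open Matrix Polynomial

lemma pow_mod_eq {M : Type*} [Monoid M] {x : M} {N : ℕ} (hx : x ^ N = 1) (a : ℕ) :
    x ^ a = x ^ (a % N) := by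
  conv_lhs => rw [← Nat.mod_add_div a N, pow_add, pow_mul, hx, one_pow, mul_one]

section tools
variable {N : ℕ} [NeZero N] {ζ : ℂ} (hζ : IsPrimitiveRoot ζ N)

lemma cast_val (a : ZMod N) : ((a.val : ℕ) : ZMod N) = a := by
  rw [ZMod.natCast_val, ZMod.cast_id]

lemma ered (hζN : ζ ^ N = 1) (a : ℕ) : ζ ^ a = ζ ^ ((a : ZMod N)).val := by
  rw [ZMod.val_natCast, ← pow_mod_eq hζN]

lemma eadd (hζN : ζ ^ N = 1) (a b : ZMod N) : ζ ^ (a + b).val = ζ ^ a.val * ζ ^ b.val := by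
  have h1 : ζ ^ (a + b).val = ζ ^ (((a.val + b.val : ℕ) : ZMod N)).val := by
    rw [Nat.cast_add, cast_val, cast_val]
  rw [h1, ← ered hζN, pow_add]

lemma emul (hζN : ζ ^ N = 1) (a b : ZMod N) : ζ ^ (a * b).val = (ζ ^ a.val) ^ b.val := by
  have h1 : ζ ^ (a * b).val = ζ ^ (((a.val * b.val : ℕ) : ZMod N)).val := by
    rw [Nat.cast_mul, cast_val, cast_val]
  rw [h1, ← ered hζN, pow_mul]

include hζ in
lemma eone (c : ZMod N) : ζ ^ c.val = 1 ↔ c = 0 := by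
  rw [hζ.pow_eq_one_iff_dvd, ← ZMod.val_eq_zero]
  exact ⟨fun h => Nat.eq_zero_of_dvd_of_lt h (ZMod.val_lt c), fun h => h ▸ dvd_zero N⟩

include hζ in
lemma sum_e (c : ZMod N) : ∑ k : ZMod N, ζ ^ (c * k).val = if c = 0 then (N : ℂ) else 0 := by
  have hζN : ζ ^ N = 1 := hζ.pow_eq_one
  by_cases hc : c = 0
  · simp only [hc, if_pos, zero_mul]
    simp [ZMod.val_zero, Finset.card_univ, ZMod.card]
  · rw [if_neg hc]
    set x := ζ ^ c.val with hx
    have hsum : ∑ k : ZMod N, ζ ^ (c * k).val = ∑ i ∈ Finset.range N, x ^ i := by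
      rw [Finset.sum_bij' (fun (k : ZMod N) _ => k.val) (fun (i : ℕ) _ => (i : ZMod N))
        (fun k _ => Finset.mem_range.mpr (ZMod.val_lt k))
        (fun i hi => Finset.mem_univ _)
        (fun k _ => cast_val k)
        (fun i hi => ZMod.val_cast_of_lt (Finset.mem_range.mp hi))
        (fun k _ => emul hζN c k)]
    have hx1 : x ≠ 1 := fun h => hc ((eone hζ c).mp h)
    have hxN : x ^ N = 1 := by rw [hx, ← pow_mul, mul_comm, pow_mul, hζN, one_pow]
    have hgeom := geom_sum_mul x N
    rw [hxN, sub_self] at hgeom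
    rw [hsum]
    rcases mul_eq_zero.mp hgeom with h | h
    · exact h
    · exact absurd (sub_eq_zero.mp h) hx1
end tools
theorem idem_trace {m : ℕ} (E : Matrix (Fin m) (Fin m) ℂ) (h : E * E = E) :
    ∃ r : ℕ, E.trace = r ∧ (r = 0 → E = 0) := by
  set f := Matrix.toLin' E with hf
  have hff : f ∘ₗ f = f := by rw [hf, ← Matrix.toLin'_mul, h]
  obtain ⟨q, hq⟩ := (LinearMap.isProj_iff_isIdempotentElem f).mpr hff
  have htr : LinearMap.trace ℂ _ f = (Module.finrank ℂ q : ℂ) := hq.trace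
  refine ⟨Module.finrank ℂ q, ?_, ?_⟩
  · rw [← htr, LinearMap.trace_eq_matrix_trace ℂ (Pi.basisFun ℂ (Fin m)),
      LinearMap.toMatrix_eq_toMatrix', hf, LinearMap.toMatrix'_toLin']
  · intro hr
    have hq0 : q = ⊥ := Submodule.finrank_eq_zero.mp hr
    have hE : f = 0 := by
      apply LinearMap.ext; intro x
      simpa [hq0] using hq.map_mem x
    apply Matrix.toLin'.injective
    rw [← hf, hE, map_zero]

theorem cyclic_bound {p n m : ℕ} (hp : p.Prime) (hn : 1 ≤ n)
    (A : Matrix (Fin m) (Fin m) ℂ)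
    (hA : A ^ (p ^ n) = 1) (hfaith : A ^ (p ^ (n - 1)) ≠ 1)
    (T : ℕ → ℕ) (hT : ∀ j : ℕ, (A ^ j).trace = (T j : ℂ)) : p ^ n ≤ m := by
  classical
  set N := p ^ n with hNdef
  have hN0 : 0 < N := pow_pos hp.pos n
  have hN1 : 1 < N := by
    calc 1 < p := hp.one_lt
    _ = p ^ 1 := (pow_one p).symm
    _ ≤ p ^ n := Nat.pow_le_pow_right hp.pos hn
  haveI : NeZero N := ⟨hN0.ne'⟩
  have hNC : (N : ℂ) ≠ 0 := Nat.cast_ne_zero.mpr hN0.ne'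
  obtain ⟨ζ, hζ⟩ : ∃ ζ : ℂ, IsPrimitiveRoot ζ N :=
    ⟨_, Complex.isPrimitiveRoot_exp N hN0.ne'⟩
  have hζN : ζ ^ N = 1 := hζ.pow_eq_one
  set e : ZMod N → ℂ := fun j => ζ ^ j.val with he
  set B : ZMod N → Matrix (Fin m) (Fin m) ℂ := fun j => A ^ j.val with hB
  have hBadd : ∀ a b : ZMod N, B (a + b) = B a * B b := by
    intro a b
    show A ^ (a+b).val = A ^ a.val * A ^ b.val
    have h1 : A ^ (a + b).val = A ^ (((a.val + b.val : ℕ) : ZMod N)).val := by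
      rw [Nat.cast_add, cast_val, cast_val]
    rw [h1, ZMod.val_natCast, ← pow_mod_eq hA, pow_add]
  have hB0 : B 0 = 1 := by show A ^ (0 : ZMod N).val = 1; rw [ZMod.val_zero, pow_zero]
  -- the projectors
  set P : ZMod N → Matrix (Fin m) (Fin m) ℂ :=
    fun k => (N : ℂ)⁻¹ • ∑ j : ZMod N, e (-(k * j)) • B j with hP
  have hPdef : ∀ k, P k = (N : ℂ)⁻¹ • ∑ j : ZMod N, e (-(k * j)) • B j := fun _ => rfl
  have hBP : ∀ c k : ZMod N, B c * P k = e (k * c) • P k := by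
    intro c k
    have step1 : B c * P k = (N : ℂ)⁻¹ • ∑ j : ZMod N, e (-(k * j)) • B (c + j) := by
      rw [hPdef]
      simp only [Matrix.mul_smul, Finset.mul_sum]
      congr 1
      refine Finset.sum_congr rfl fun j _ => ?_
      rw [← hBadd]
    have step2 : ∑ j : ZMod N, e (-(k * j)) • B (c + j)
        = ∑ j : ZMod N, e (-(k * (j - c))) • B j := by
      refine Fintype.sum_bijective (fun j => c + j) (Equiv.addLeft c).bijective _ _ fun j => ?_
      congr 2
      ring_nf
    have step3 : ∀ j : ZMod N, e (-(k * (j - c))) = e (k * c) * e (-(k * j)) := by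
      intro j
      have : (-(k * (j - c))) = k * c + -(k * j) := by ring
      rw [this]
      exact eadd hζN _ _
    rw [step1, step2]
    simp only [step3, mul_smul]
    rw [← Finset.smul_sum, smul_comm ((N:ℂ)⁻¹) (e (k*c)), ← hPdef k]
  have hPP : ∀ k : ZMod N, P k * P k = P k := by
    intro k
    have step1 : P k * P k = (N : ℂ)⁻¹ • ∑ j : ZMod N, e (-(k * j)) • (B j * P k) := by
      conv_lhs => rw [hPdef]
      rw [Matrix.smul_mul, Finset.sum_mul]
      congr 1
      refine Finset.sum_congr rfl fun j _ => ?_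
      rw [Matrix.smul_mul]
    have step2 : ∀ j : ZMod N, e (-(k * j)) • (e (k * j) • P k) = P k := by
      intro j
      rw [smul_smul]
      have : e (-(k * j)) * e (k * j) = 1 := by
        rw [← eadd hζN, neg_add_cancel]
        show ζ ^ (0 : ZMod N).val = 1
        rw [ZMod.val_zero, pow_zero]
      rw [this, one_smul]
    rw [step1]
    simp only [hBP, step2]
    rw [Finset.sum_const, Finset.card_univ, ZMod.card,
      ← Nat.cast_smul_eq_nsmul ℂ, smul_smul, inv_mul_cancel₀ hNC, one_smul]
  have hPsum : ∑ k : ZMod N, P k = 1 := by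
    simp only [hPdef]
    rw [← Finset.smul_sum, Finset.sum_comm]
    have inner : ∀ j : ZMod N, ∑ k : ZMod N, e (-(k * j)) • B j
        = (if j = 0 then (N : ℂ) else 0) • B j := by
      intro j
      rw [← Finset.sum_smul]
      congr 1
      have : ∀ k : ZMod N, e (-(k * j)) = e ((-j) * k) := by
        intro k; congr 1; ring
      simp only [this]
      rw [sum_e hζ (-j)]
      simp [neg_eq_zero]
    simp only [inner, ite_smul, zero_smul]
    rw [Finset.sum_ite_eq' Finset.univ (0 : ZMod N) (fun j => (N:ℂ) • B j)]
    simp only [Finset.mem_univ, if_pos, hB0]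
    rw [smul_smul, inv_mul_cancel₀ hNC, one_smul]
  have hBsum : ∀ c : ZMod N, B c = ∑ k : ZMod N, e (k * c) • P k := by
    intro c
    conv_lhs => rw [← Matrix.mul_one (B c), ← hPsum]
    rw [Finset.mul_sum]
    exact Finset.sum_congr rfl fun k _ => hBP c k
  -- traces of the projectors are natural numbers
  choose r hr1 hr2 using fun k => idem_trace (P k) (hPP k)
  -- the character polynomial
  set F : Polynomial ℚ := ∑ j : ZMod N, Polynomial.C (T j.val : ℚ) * Polynomial.X ^ j.val with hF
  have haev : ∀ η : ℂ, Polynomial.aeval η F = ∑ j : ZMod N, (T j.val : ℂ) * η ^ j.val := by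
    intro η
    rw [hF, map_sum]
    refine Finset.sum_congr rfl fun j _ => ?_
    simp
  have hPtr : ∀ k : ZMod N, (N : ℂ) * (r k : ℂ) = Polynomial.aeval (e (-k)) F := by
    intro k
    have h1 : (P k).trace = (N:ℂ)⁻¹ * ∑ j : ZMod N, (T j.val : ℂ) * (e (-k)) ^ j.val := by
      rw [hPdef k, Matrix.trace_smul, Matrix.trace_sum, smul_eq_mul]
      congr 1
      refine Finset.sum_congr rfl fun j _ => ?_
      have h2 : e (-(k*j)) = (e (-k)) ^ j.val := by
        rw [show -(k*j) = (-k) * j by ring]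
        exact emul hζN (-k) j
      rw [Matrix.trace_smul, h2, smul_eq_mul, show (B j).trace = (T j.val : ℂ) from hT j.val,
        mul_comm]
    have h3 : (r k : ℂ) = (N:ℂ)⁻¹ * ∑ j : ZMod N, (T j.val : ℂ) * (e (-k)) ^ j.val :=
      (hr1 k).symm.trans h1
    rw [haev, h3, ← mul_assoc, mul_inv_cancel₀ hNC, one_mul]
  -- Galois invariance of multiplicities
  have hnegdvd : ∀ k : ZMod N, ¬ p ∣ k.val → ¬ p ∣ (-k).val := by
    intro k hk hc
    have hz : (k + -k).val = 0 := by rw [add_neg_cancel, ZMod.val_zero]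
    rw [ZMod.val_add] at hz
    have hsum : p ∣ k.val + (-k).val := by
      refine dvd_trans ?_ (Nat.dvd_of_mod_eq_zero hz)
      rw [hNdef]
      exact dvd_pow_self p (by omega)
    exact hk ((Nat.dvd_add_iff_left hc).mpr hsum)
  have hprim : ∀ k : ZMod N, ¬ p ∣ k.val → IsPrimitiveRoot (e (-k)) N := by
    intro k hk
    have hco : Nat.Coprime (-k).val N := by
      have h4 : Nat.Coprime (-k).val (p ^ n) :=
        Nat.Coprime.pow_right n (Nat.coprime_comm.mp
          (hp.coprime_iff_not_dvd.mpr (hnegdvd k hk)))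
      exact h4
    exact hζ.pow_of_coprime _ hco
  have hgal : ∀ k k' : ZMod N, ¬ p ∣ k.val → ¬ p ∣ k'.val → r k = r k' := by
    intro k k' hk hk'
    have hη := hprim k hk
    have hη' := hprim k' hk'
    set c : ℚ := (N : ℚ) * (r k : ℚ) with hc
    have hroot : Polynomial.aeval (e (-k)) (F - Polynomial.C c) = 0 := by
      rw [map_sub, Polynomial.aeval_C, ← hPtr k, hc]
      push_cast
      ring
    have hdvd : Polynomial.cyclotomic N ℚ ∣ F - Polynomial.C c := by
      rw [Polynomial.cyclotomic_eq_minpoly_rat hη hN0]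
      exact minpoly.dvd ℚ _ hroot
    obtain ⟨g, hg⟩ := hdvd
    have hcyc0 : Polynomial.aeval (e (-k')) (Polynomial.cyclotomic N ℚ) = 0 := by
      have h5 := hη'.isRoot_cyclotomic hN0
      rw [Polynomial.IsRoot.def] at h5
      rw [Polynomial.aeval_def, Polynomial.eval₂_eq_eval_map, Polynomial.map_cyclotomic]
      exact h5
    have h6 : Polynomial.aeval (e (-k')) (F - Polynomial.C c) = 0 := by
      rw [hg, _root_.map_mul, hcyc0, zero_mul]
    rw [map_sub, Polynomial.aeval_C, sub_eq_zero, ← hPtr k', hc] at h6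
    push_cast at h6
    have h7 : (r k' : ℂ) = (r k : ℂ) := mul_left_cancel₀ hNC h6
    exact_mod_cast h7.symm
  -- the special element c₀ = p^(n-1)
  set c₀ : ZMod N := ((p ^ (n-1) : ℕ) : ZMod N) with hc₀
  have hlt : p ^ (n-1) < N := by
    rw [hNdef]
    exact Nat.pow_lt_pow_right hp.one_lt (by omega)
  have hc₀v : c₀.val = p ^ (n-1) := ZMod.val_cast_of_lt hlt
  have hc₀0 : c₀ ≠ 0 := by
    intro h
    rw [← ZMod.val_eq_zero, hc₀v] at h
    exact (pow_pos hp.pos (n-1)).ne' h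
  have hBc₀ : B c₀ = A ^ (p ^ (n-1)) := by
    show A ^ c₀.val = A ^ (p ^ (n-1))
    rw [hc₀v]
  have hone : ¬ p ∣ (1 : ZMod N).val := by
    rw [ZMod.val_one_eq_one_mod, Nat.mod_eq_of_lt hN1]
    exact fun hd => absurd (Nat.le_of_dvd one_pos hd) (not_le.mpr hp.one_lt)
  have hωone : ∀ k : ZMod N, p ∣ k.val → e (k * c₀) = 1 := by
    intro k hk
    have h2 : e (k * c₀) = (e c₀) ^ k.val := by
      rw [show k * c₀ = c₀ * k by ring]
      exact emul hζN c₀ k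
    have hω : (e c₀) ^ p = 1 := by
      show (ζ ^ c₀.val) ^ p = 1
      rw [hc₀v, ← pow_mul, ← pow_succ, show n - 1 + 1 = n by omega, ← hNdef, hζN]
    obtain ⟨s, hs⟩ := hk
    rw [h2, hs, pow_mul, hω, one_pow]
  -- faithfulness gives a ≥ 1
  set a := r 1 with haa
  have ha : a ≠ 0 := by
    intro h0
    apply hfaith
    have hP0 : ∀ k : ZMod N, ¬ p ∣ k.val → P k = 0 := fun k hk =>
      hr2 k ((hgal k 1 hk hone).trans h0)
    have hBc : B c₀ = 1 := by
      rw [hBsum c₀, ← hPsum]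
      refine Finset.sum_congr rfl fun k _ => ?_
      by_cases hk : p ∣ k.val
      · rw [hωone k hk, one_smul]
      · rw [hP0 k hk, smul_zero]
    rw [← hBc₀, hBc]
  -- counting
  have htr1 : (m : ℂ) = ∑ k : ZMod N, (r k : ℂ) := by
    have h8 := congrArg Matrix.trace hPsum
    rw [Matrix.trace_sum, Matrix.trace_one] at h8
    simp only [hr1] at h8
    simpa using h8.symm
  have hm : m = ∑ k : ZMod N, r k := by
    have h9 : ((∑ k : ZMod N, r k : ℕ) : ℂ) = ((m : ℕ) : ℂ) := by
      push_cast
      rw [← htr1]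
    exact_mod_cast h9.symm
  set D : Finset (ZMod N) := Finset.univ.filter (fun k => p ∣ k.val) with hD
  have hsplit : ∑ k ∈ D, r k + ∑ k ∈ Finset.univ.filter (fun k => ¬ p ∣ k.val), r k
      = ∑ k : ZMod N, r k := Finset.sum_filter_add_sum_filter_not _ _ _
  have hDc_val : ∀ k ∈ Finset.univ.filter (fun k : ZMod N => ¬ p ∣ k.val), r k = a :=
    fun k hk => hgal k 1 (Finset.mem_filter.mp hk).2 hone
  have hDcsum : ∑ k ∈ Finset.univ.filter (fun k : ZMod N => ¬ p ∣ k.val), r k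
      = a * (Finset.univ.filter (fun k : ZMod N => ¬ p ∣ k.val)).card := by
    rw [Finset.sum_congr rfl hDc_val, Finset.sum_const, smul_eq_mul, mul_comm]
  -- trace identity at c₀
  have hsum0 : ∑ k : ZMod N, e (c₀ * k) = 0 := by
    rw [sum_e hζ c₀, if_neg hc₀0]
  have htc : (T (p ^ (n-1)) : ℂ) + (a : ℂ) * (D.card : ℂ) = ((∑ k ∈ D, r k : ℕ) : ℂ) := by
    have h10 : (T (p ^ (n-1)) : ℂ) = (B c₀).trace := by rw [hBc₀, hT]
    have h11 : (B c₀).trace = ∑ k : ZMod N, e (k * c₀) * (r k : ℂ) := by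
      rw [hBsum c₀, Matrix.trace_sum]
      refine Finset.sum_congr rfl fun k _ => ?_
      rw [Matrix.trace_smul, hr1 k, smul_eq_mul]
    have h12 : ∑ k : ZMod N, e (k * c₀) * (r k : ℂ)
        = ∑ k ∈ D, e (k * c₀) * (r k : ℂ)
          + ∑ k ∈ Finset.univ.filter (fun k : ZMod N => ¬ p ∣ k.val), e (k * c₀) * (r k : ℂ) :=
      (Finset.sum_filter_add_sum_filter_not _ _ _).symm
    have h13 : ∑ k ∈ D, e (k * c₀) * (r k : ℂ) = ((∑ k ∈ D, r k : ℕ) : ℂ) := by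
      push_cast
      refine Finset.sum_congr rfl fun k hk => ?_
      rw [hωone k (Finset.mem_filter.mp hk).2, one_mul]
    have h14 : ∑ k ∈ Finset.univ.filter (fun k : ZMod N => ¬ p ∣ k.val), e (k * c₀) * (r k : ℂ)
        = (a : ℂ) * ∑ k ∈ Finset.univ.filter (fun k : ZMod N => ¬ p ∣ k.val), e (k * c₀) := by
      rw [Finset.mul_sum]
      refine Finset.sum_congr rfl fun k hk => ?_
      rw [hDc_val k hk, mul_comm]
    have h15 : ∑ k ∈ Finset.univ.filter (fun k : ZMod N => ¬ p ∣ k.val), e (k * c₀)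
        = - (D.card : ℂ) := by
      have h16 : ∑ k ∈ D, e (k * c₀) + ∑ k ∈ Finset.univ.filter (fun k : ZMod N => ¬ p ∣ k.val), e (k * c₀)
          = ∑ k : ZMod N, e (k * c₀) := Finset.sum_filter_add_sum_filter_not _ _ _
      have h17 : ∑ k : ZMod N, e (k * c₀) = 0 := by
        rw [← hsum0]
        exact Finset.sum_congr rfl fun k _ => by rw [mul_comm]
      have h18 : ∑ k ∈ D, e (k * c₀) = (D.card : ℂ) := by
        rw [Finset.sum_congr rfl (fun k hk => hωone k (Finset.mem_filter.mp hk).2),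
          Finset.sum_const, nsmul_eq_mul, mul_one]
      rw [h17, h18] at h16
      linear_combination h16
    rw [h10, h11, h12, h13, h14, h15]
    ring
  have hS : ∑ k ∈ D, r k = T (p ^ (n-1)) + a * D.card := by
    have := htc
    push_cast at this
    exact_mod_cast this.symm
  have hcards : D.card + (Finset.univ.filter (fun k : ZMod N => ¬ p ∣ k.val)).card = N := by
    rw [Finset.card_filter_add_card_filter_not]
    rw [Finset.card_univ, ZMod.card]
  have hfin : m = T (p ^ (n-1)) + a * N := by
    rw [hm, ← hsplit, hS, hDcsum]
    have h20 : T (p ^ (n-1)) + a * D.card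
        + a * (Finset.univ.filter (fun k : ZMod N => ¬ p ∣ k.val)).card
        = T (p ^ (n-1))
          + a * (D.card + (Finset.univ.filter (fun k : ZMod N => ¬ p ∣ k.val)).card) := by
      ring
    rw [h20, hcards]
  have ha1 : 1 ≤ a := Nat.one_le_iff_ne_zero.mpr ha
  calc N = 1 * N := (one_mul N).symm
  _ ≤ a * N := Nat.mul_le_mul_right N ha1
  _ ≤ T (p ^ (n-1)) + a * N := Nat.le_add_left _ _
  _ = m := hfin.symm




/-- The affine action of the holomorph on the cyclic group, as permutations. -/
def holPerm (N : ℕ) : Hol N →* Equiv.Perm (Cyc N) where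
  toFun g := (g.right : MulAut (Cyc N)).toEquiv.trans (Equiv.mulLeft g.left)
  map_one' := by
    ext x
    simp
  map_mul' g h := by
    ext x
    show (g * h).left * (g * h).right x = g.left * g.right (h.left * h.right x)
    rw [SemidirectProduct.mul_left, SemidirectProduct.mul_right]
    simp only [MonoidHom.id_apply, MulAut.mul_apply, _root_.map_mul]
    rw [mul_assoc]

lemma holPerm_injective (N : ℕ) : Function.Injective (holPerm N) := by
  rw [injective_iff_map_eq_one]
  intro g hg
  have h1 : ∀ x : Cyc N, g.left * g.right x = x := fun x => by
    have := congrArg (fun (σ : Equiv.Perm (Cyc N)) => σ x) hg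
    simpa [holPerm] using this
  have hl : g.left = 1 := by simpa using h1 1
  have hr : g.right = 1 := by
    ext x
    have := h1 x
    rw [hl, one_mul] at this
    simpa using this
  ext <;> simp [hl, hr]

/-- Conjugating permutations by an equivalence, as a monoid hom. -/
def permCongrHom {α β : Type*} (e : α ≃ β) : Equiv.Perm α →* Equiv.Perm β where
  toFun σ := (e.symm.trans σ).trans e
  map_one' := by ext x; simp
  map_mul' σ τ := by ext x; simp

lemma permCongrHom_injective {α β : Type*} (e : α ≃ β) :
    Function.Injective (permCongrHom e) := by
  intro σ τ h
  ext x
  have := congrArg (fun (ρ : Equiv.Perm β) => e.symm (ρ (e x))) h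
  simpa [permCongrHom] using this

lemma permMatrix_mul {m : ℕ} (σ τ : Equiv.Perm (Fin m)) :
    (σ.permMatrix ℚ) * (τ.permMatrix ℚ) = ((τ * σ).permMatrix ℚ) := by
  show σ.toPEquiv.toMatrix * τ.toPEquiv.toMatrix = ((τ * σ).toPEquiv.toMatrix : Matrix _ _ ℚ)
  rw [← PEquiv.toMatrix_trans, ← Equiv.toPEquiv_trans, Equiv.Perm.mul_def]

lemma permMatrix_one {m : ℕ} : ((1 : Equiv.Perm (Fin m)).permMatrix ℚ) = 1 := by
  show (1 : Equiv.Perm (Fin m)).toPEquiv.toMatrix = 1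
  rw [Equiv.Perm.one_def, Equiv.toPEquiv_refl, PEquiv.toMatrix_refl]

/-- Permutation matrices, as a monoid hom to `GL`. -/
def permGL (m : ℕ) : Equiv.Perm (Fin m) →* GL (Fin m) ℚ where
  toFun σ :=
    { val := (σ⁻¹).permMatrix ℚ
      inv := σ.permMatrix ℚ
      val_inv := by rw [permMatrix_mul, mul_inv_cancel, permMatrix_one]
      inv_val := by rw [permMatrix_mul, inv_mul_cancel, permMatrix_one] }
  map_one' := by
    refine Units.ext ?_
    show ((1 : Equiv.Perm (Fin m))⁻¹).permMatrix ℚ = 1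
    rw [inv_one, permMatrix_one]
  map_mul' σ τ := by
    refine Units.ext ?_
    show ((σ * τ)⁻¹).permMatrix ℚ = (σ⁻¹).permMatrix ℚ * (τ⁻¹).permMatrix ℚ
    rw [permMatrix_mul, ← _root_.mul_inv_rev]

lemma permGL_injective (m : ℕ) : Function.Injective (permGL m) := by
  rw [injective_iff_map_eq_one]
  intro σ hσ
  have h1 : (σ⁻¹).permMatrix ℚ = (1 : Matrix (Fin m) (Fin m) ℚ) :=
    congrArg Units.val hσ
  refine Equiv.Perm.ext fun x => ?_
  have h2 := congrFun (congrFun h1 x) (σ⁻¹ x)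
  simp only [Equiv.Perm.permMatrix, PEquiv.toMatrix_apply, Equiv.toPEquiv_apply, Option.mem_def,
    Option.some.injEq, Matrix.one_apply, if_pos rfl] at h2
  by_cases hx : x = σ⁻¹ x
  · rw [Equiv.Perm.one_apply]
    conv_lhs => rw [hx]
    simp
  · rw [if_neg hx] at h2
    norm_num at h2

lemma permGL_trace (m : ℕ) (σ : Equiv.Perm (Fin m)) :
    ∃ k : ℕ, Matrix.trace ((permGL m σ : Matrix (Fin m) (Fin m) ℚ)) = (k : ℚ) := by
  refine ⟨(Function.fixedPoints (σ⁻¹ : Equiv.Perm (Fin m))).ncard, ?_⟩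
  exact Matrix.trace_permutation (σ⁻¹)

/-- entrywise ℚ → ℂ on GL -/
noncomputable def glMap (m : ℕ) : GL (Fin m) ℚ →* GL (Fin m) ℂ :=
  Units.map (RingHom.mapMatrix (algebraMap ℚ ℂ) : Matrix (Fin m) (Fin m) ℚ →+* Matrix (Fin m) (Fin m) ℂ).toMonoidHom

lemma glMap_injective (m : ℕ) : Function.Injective (glMap m) := by
  intro u v h
  refine Units.ext ?_
  have h1 : (u : Matrix (Fin m) (Fin m) ℚ).map (algebraMap ℚ ℂ)
      = (v : Matrix (Fin m) (Fin m) ℚ).map (algebraMap ℚ ℂ) := congrArg Units.val h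
  ext i j
  have h2 := congrFun (congrFun h1 i) j
  simpa using (algebraMap ℚ ℂ).injective (by simpa [Matrix.map_apply] using h2)

lemma glMap_trace (m : ℕ) (u : GL (Fin m) ℚ) :
    Matrix.trace ((glMap m u : Matrix (Fin m) (Fin m) ℂ))
      = algebraMap ℚ ℂ (Matrix.trace (u : Matrix (Fin m) (Fin m) ℚ)) := by
  rw [AddMonoidHom.map_trace (algebraMap ℚ ℂ)]
  rfl

/-- For any prime `p` and `n ≥ 1`, for `G = Hol(C_{p^n})` one has
`c(G) = q(G) = p(G) = p^n`. -/
theorem stmt19 (p n : ℕ) (hp : p.Prime) (hn : 1 ≤ n) :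
    cDeg (Hol (p ^ n)) = p ^ n ∧ qDeg (Hol (p ^ n)) = p ^ n ∧
      permDeg (Hol (p ^ n)) = p ^ n := by
  classical
  set N := p ^ n with hNdef
  have hN0 : 0 < N := pow_pos hp.pos n
  haveI : NeZero N := ⟨hN0.ne'⟩
  -- the three sets
  set Sp : Set ℕ := {m : ℕ | ∃ f : Hol N →* Equiv.Perm (Fin m), Function.Injective f} with hSp
  set Sq : Set ℕ := {m : ℕ | ∃ f : Hol N →* GL (Fin m) ℚ, Function.Injective f ∧
    ∀ g : Hol N, ∃ k : ℕ, Matrix.trace ((f g : Matrix (Fin m) (Fin m) ℚ)) = (k : ℚ)} with hSq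
  set Sc : Set ℕ := {m : ℕ | ∃ f : Hol N →* GL (Fin m) ℂ, Function.Injective f ∧
    ∀ g : Hol N, ∃ k : ℕ, Matrix.trace ((f g : Matrix (Fin m) (Fin m) ℂ)) = (k : ℂ)} with hSc
  -- inclusions
  have hPQ : ∀ m : ℕ, m ∈ Sp → m ∈ Sq := by
    intro m hm
    obtain ⟨f, hf⟩ := hm
    refine ⟨(permGL m).comp f, (permGL_injective m).comp hf, fun g => ?_⟩
    exact permGL_trace m (f g)
  have hQC : ∀ m : ℕ, m ∈ Sq → m ∈ Sc := by
    intro m hm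
    obtain ⟨f, hf, htr⟩ := hm
    refine ⟨(glMap m).comp f, (glMap_injective m).comp hf, fun g => ?_⟩
    obtain ⟨k, hk⟩ := htr g
    refine ⟨k, ?_⟩
    show Matrix.trace ((glMap m (f g) : Matrix (Fin m) (Fin m) ℂ)) = (k : ℂ)
    rw [glMap_trace m (f g), hk, map_natCast]
  -- upper bound : N ∈ Sp
  have hPmem : N ∈ Sp := by
    have hcard : Fintype.card (Cyc N) = N := by
      rw [Fintype.card_multiplicative, ZMod.card]
    refine ⟨(permCongrHom (Fintype.equivFinOfCardEq hcard)).comp (holPerm N), ?_⟩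
    exact (permCongrHom_injective _).comp (holPerm_injective N)
  have hQmem : N ∈ Sq := hPQ N hPmem
  have hCmem : N ∈ Sc := hQC N hQmem
  -- lower bound
  have hlow : ∀ m : ℕ, m ∈ Sc → N ≤ m := by
    intro m hm
    obtain ⟨f, hf, htr⟩ := hm
    set g₀ : Hol N := SemidirectProduct.inl (Multiplicative.ofAdd (1 : ZMod N)) with hg₀
    set A : Matrix (Fin m) (Fin m) ℂ := ((f g₀ : GL (Fin m) ℂ) : Matrix (Fin m) (Fin m) ℂ)
      with hA
    have hpow : ∀ j : ℕ, A ^ j = ((f (g₀ ^ j) : GL (Fin m) ℂ) : Matrix (Fin m) (Fin m) ℂ) := by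
      intro j
      rw [map_pow, hA, ← Units.val_pow_eq_pow_val]
    have hg₀pow : ∀ j : ℕ, g₀ ^ j
        = SemidirectProduct.inl (Multiplicative.ofAdd ((j : ZMod N))) := by
      intro j
      rw [hg₀, ← map_pow]
      congr 1
      rw [← ofAdd_nsmul]
      congr 1
      rw [nsmul_eq_mul, mul_one]
    have hAN : A ^ N = 1 := by
      rw [hpow N, hg₀pow N, ZMod.natCast_self]
      show ((f (SemidirectProduct.inl (Multiplicative.ofAdd (0 : ZMod N)))
        : GL (Fin m) ℂ) : Matrix (Fin m) (Fin m) ℂ) = 1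
      have : Multiplicative.ofAdd (0 : ZMod N) = (1 : Cyc N) := rfl
      rw [this, _root_.map_one, _root_.map_one, Units.val_one]
    have hfaith : A ^ (p ^ (n - 1)) ≠ 1 := by
      intro hcon
      rw [hpow _, hg₀pow _] at hcon
      have h1 : f (SemidirectProduct.inl (Multiplicative.ofAdd ((p ^ (n-1) : ℕ) : ZMod N)))
          = 1 := Units.ext hcon
      have h2 := hf (h1.trans (map_one f).symm)
      have h3 : Multiplicative.ofAdd (((p ^ (n-1) : ℕ) : ZMod N)) = 1 :=
        SemidirectProduct.inl_injective (h2.trans rfl)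
      have h4 : (((p ^ (n-1) : ℕ)) : ZMod N) = 0 := h3
      rw [ZMod.natCast_eq_zero_iff] at h4
      have h5 : N ≤ p ^ (n-1) := Nat.le_of_dvd (pow_pos hp.pos _) h4
      have h6 : p ^ (n-1) < N := by
        rw [hNdef]
        exact Nat.pow_lt_pow_right hp.one_lt (by omega)
      omega
    choose T hT using fun j : ℕ => htr (g₀ ^ j)
    have hTA : ∀ j : ℕ, (A ^ j).trace = (T j : ℂ) := by
      intro j
      rw [hpow j]
      exact hT j
    exact cyclic_bound hp hn A hAN hfaith T hTA
  -- put everything together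
  have hlowq : ∀ m : ℕ, m ∈ Sq → N ≤ m := fun m hm => hlow m (hQC m hm)
  have hlowp : ∀ m : ℕ, m ∈ Sp → N ≤ m := fun m hm => hlowq m (hPQ m hm)
  refine ⟨le_antisymm (Nat.sInf_le hCmem) (hlow _ (Nat.sInf_mem ⟨N, hCmem⟩)),
    le_antisymm (Nat.sInf_le hQmem) (hlowq _ (Nat.sInf_mem ⟨N, hQmem⟩)),
    le_antisymm (Nat.sInf_le hPmem) (hlowp _ (Nat.sInf_mem ⟨N, hPmem⟩))⟩
end
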